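/- arXiv:2008.00857 — 6 statements merged into one kernel-verified Lean document; each statement's English description precedes it below -/
import Mathlib

section
/- Two-dimensional Rademacher–Menshov inequality: Let K be a positive integer and for k₁,k₂ ∈ {1,...,K} let a_{k₁,k₂} be complex numbers, with the convention a_{k₁,k₂}=0 if k₁=0 or k₂=0. Then for any 1 < r < ∞, the diagonal sequence satisfies ‖(a_{k,k})_{k∈[K]}‖_{V^r} ≲_r Σ_{M₁,M₂∈2^ℕ∩[K]} ‖(Δa_{M₁j₁,M₂j₂})_{(j₁,j₂)∈[K/M₁]×[K/M₂]}‖_{ℓ^r}, where Δa_{M₁j₁,M₂j₂} := a_{M₁j₁,M₂j₂} − a_{M₁(j₁−1),M₂j₂} − a_{M₁j₁,M₂(j₂−1)} + a_{M₁(j₁−1),M₂(j₂−1)}. -/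
open scoped ENNReal NNReal

/-- The `r`-variation seminorm of a family of complex numbers indexed by a
totally ordered set. -/
noncomputable def vSeminorm {I : Type*} [LinearOrder I] (r : ℝ) (a : I → ℂ) : ℝ≥0∞ :=
  ⨆ (J : ℕ) (t : Fin (J + 1) → I) (_ : Monotone t),
    (∑ j : Fin J, (‖a (t j.succ) - a (t j.castSucc)‖₊ : ℝ≥0∞) ^ r) ^ (1 / r)

/-- The `r`-variation norm: `sup_t |a t|` plus the `r`-variation seminorm. -/
noncomputable def vNorm {I : Type*} [LinearOrder I] (r : ℝ) (a : I → ℂ) : ℝ≥0∞ :=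
  (⨆ t : I, (‖a t‖₊ : ℝ≥0∞)) + vSeminorm r a

/-- The double difference
`Δa_{M₁j₁,M₂j₂} = a_{M₁j₁,M₂j₂} − a_{M₁(j₁−1),M₂j₂} − a_{M₁j₁,M₂(j₂−1)} + a_{M₁(j₁−1),M₂(j₂−1)}`. -/
def doubleDiff (a : ℕ → ℕ → ℂ) (M₁ j₁ M₂ j₂ : ℕ) : ℂ :=
  a (M₁ * j₁) (M₂ * j₂) - a (M₁ * (j₁ - 1)) (M₂ * j₂)
    - a (M₁ * j₁) (M₂ * (j₂ - 1)) + a (M₁ * (j₁ - 1)) (M₂ * (j₂ - 1))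

/-!
Greedily split an interval `(t, t']` into dyadic intervals `(2^i (j-1), 2^i j]`, at most two of
each length. Since `a` vanishes on the axes, `a(u',u') - a(u,u)` is the sum of `Δa` over the
products of dyadic intervals tiling `(u, u'] × (0, u']` and `(0, u] × (u, u']`. Fix a pair of
scales: each increment of a monotone sequence `u₀ ≤ u₁ ≤ ⋯ ≤ u_J ≤ K` then uses at most four
rectangles of that shape, and different increments use different rectangles because the intervals
`(u_j, u_{j+1}]` are disjoint. Hence the `ℓ^r` norm over `j` of these contributions is at most
`4` times the `ℓ^r` norm of all `Δa` at that pair of scales, and Minkowski's inequality over the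
pairs of scales bounds the `r`-variation by `8` times the right-hand side. The supremum term is
the case of a single increment starting at `0`.
-/

open Finset Function

/-- `j ∈ dyadicBlocks i t t'` iff `(2^i (j-1), 2^i j]` is a block of length `2^i` in the dyadic
decomposition of `(t, t']`: an odd endpoint contributes a unit block, and the rest is twice the
decomposition of `((t+1)/2, t'/2]`. -/
def dyadicBlocks : ℕ → ℕ → ℕ → Finset ℕ
  | 0, t, t' =>
    if t < t' then (if t % 2 = 1 then {t + 1} else ∅) ∪ (if t' % 2 = 1 then {t'} else ∅) else ∅
  | i + 1, t, t' => dyadicBlocks i ((t + 1) / 2) (t' / 2)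

theorem bounds_of_mem_dyadicBlocks {i t t' j : ℕ} (h : j ∈ dyadicBlocks i t t') :
    1 ≤ j ∧ t ≤ 2 ^ i * (j - 1) ∧ 2 ^ i * j ≤ t' := by
  induction i generalizing t t' with
  | zero =>
    simp only [dyadicBlocks] at h
    split_ifs at h <;> simp at h <;> omega
  | succ i ih =>
    obtain ⟨hj, hlo, hhi⟩ := ih h
    rw [pow_succ, mul_comm _ 2, mul_assoc, mul_assoc]
    omega

theorem card_dyadicBlocks_le_two (i t t' : ℕ) : #(dyadicBlocks i t t') ≤ 2 := by
  induction i generalizing t t' with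
  | zero =>
    simp only [dyadicBlocks]
    split_ifs <;> simp [Finset.card_le_two]
  | succ i ih => exact ih _ _

theorem dyadicBlocks_eq_empty_of_le {i t t' : ℕ} (h : t' ≤ t) : dyadicBlocks i t t' = ∅ := by
  refine eq_empty_of_forall_notMem fun j hj => ?_
  obtain ⟨hj, hlo, hhi⟩ := bounds_of_mem_dyadicBlocks hj
  have : 2 ^ i * (j - 1) < 2 ^ i * j := Nat.mul_lt_mul_of_pos_left (by omega) (by positivity)
  omega

theorem disjoint_dyadicBlocks {i t₁ t₂ s₁ s₂ : ℕ} (h : t₂ ≤ s₁) :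
    Disjoint (dyadicBlocks i t₁ t₂) (dyadicBlocks i s₁ s₂) := by
  refine disjoint_left.mpr fun j hj hj' => ?_
  obtain ⟨hj, -, hhi⟩ := bounds_of_mem_dyadicBlocks hj
  obtain ⟨-, hlo, -⟩ := bounds_of_mem_dyadicBlocks hj'
  have : 2 ^ i * (j - 1) < 2 ^ i * j := Nat.mul_lt_mul_of_pos_left (by omega) (by positivity)
  omega

theorem dyadicBlocks_subset_Icc {i t t' K : ℕ} (hK : t' ≤ K) :
    dyadicBlocks i t t' ⊆ Icc 1 (K / 2 ^ i) := fun j hj => by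
  obtain ⟨hj, -, hhi⟩ := bounds_of_mem_dyadicBlocks hj
  rw [mem_Icc, Nat.le_div_iff_mul_le (by positivity), mul_comm]
  exact ⟨hj, hhi.trans hK⟩

theorem pairwise_disjoint_dyadicBlocks {J : ℕ} {u : Fin (J + 1) → ℕ} (hu : Monotone u) (i : ℕ) :
    Pairwise (Disjoint on fun j : Fin J => dyadicBlocks i (u j.castSucc) (u j.succ)) := by
  intro j j' hjj'
  rcases hjj'.lt_or_gt with h | h
  · exact disjoint_dyadicBlocks (hu (Fin.succ_le_castSucc_iff.mpr h))
  · exact (disjoint_dyadicBlocks (hu (Fin.succ_le_castSucc_iff.mpr h))).symm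

theorem sum_dyadicBlocks_zero {M : Type*} [AddCommMonoid M] {t t' : ℕ} (h : t < t') (f : ℕ → M) :
    ∑ j ∈ dyadicBlocks 0 t t', f j =
      (if t % 2 = 1 then f (t + 1) else 0) + (if t' % 2 = 1 then f t' else 0) := by
  rw [dyadicBlocks, if_pos h, sum_union]
  · split_ifs <;> simp
  · split_ifs <;> simp
    omega

theorem sum_dyadicBlocks_sub {G : Type*} [AddCommGroup G] (n : ℕ) {t t' : ℕ} (h : t ≤ t')
    (ht' : t' < 2 ^ n) (g : ℕ → G) :
    ∑ i ∈ range n, ∑ j ∈ dyadicBlocks i t t', (g (2 ^ i * j) - g (2 ^ i * (j - 1))) =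
      g t' - g t := by
  induction n generalizing t t' g with
  | zero => simp [show t' = 0 by simpa using ht', show t = 0 by simp at ht'; omega]
  | succ n ih =>
    rcases h.eq_or_lt with rfl | hlt
    · simp [dyadicBlocks_eq_empty_of_le le_rfl]
    rw [sum_range_succ', sum_dyadicBlocks_zero hlt]
    have hrec := ih (t := (t + 1) / 2) (t' := t' / 2) (by omega)
      (by rw [pow_succ] at ht'; omega) (fun x => g (2 * x))
    simp only [dyadicBlocks, pow_succ, mul_comm _ 2, mul_assoc] at hrec ⊢
    rw [hrec, show 2 * (t' / 2) = t' - t' % 2 by omega, show 2 * ((t + 1) / 2) = t + t % 2 by omega]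
    rcases Nat.mod_two_eq_zero_or_one t with ht | ht <;>
      rcases Nat.mod_two_eq_zero_or_one t' with ht' | ht' <;>
      simp [ht, ht']
    abel

namespace ENNReal

variable {r : ℝ}

theorem sum_le_card_mul_rpow_sum_rpow {ι : Type*} (hr : 0 < r) (s : Finset ι) (f : ι → ℝ≥0∞) :
    ∑ i ∈ s, f i ≤ #s * (∑ i ∈ s, f i ^ r) ^ (1 / r) := by
  rw [← nsmul_eq_mul, ← sum_const]
  refine sum_le_sum fun i hi => ?_
  rw [one_div, ENNReal.le_rpow_inv_iff hr]
  exact single_le_sum (f := fun i => f i ^ r) (fun _ _ => zero_le) hi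

theorem Lp_sum_le {ι κ : Type*} (hr : 1 ≤ r) (s : Finset ι) (t : Finset κ)
    (f : ι → κ → ℝ≥0∞) :
    (∑ k ∈ t, (∑ i ∈ s, f i k) ^ r) ^ (1 / r) ≤ ∑ i ∈ s, (∑ k ∈ t, f i k ^ r) ^ (1 / r) := by
  classical
  induction s using Finset.induction_on with
  | empty =>
    have hr₀ : 0 < r := zero_lt_one.trans_le hr
    simp [ENNReal.zero_rpow_of_pos hr₀, hr₀]
  | insert i s hi ih =>
    simp only [sum_insert hi]
    exact (ENNReal.Lp_add_le _ _ _ hr).trans (add_le_add_right ih _)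

theorem Lp_sum_blocks_le {ι κ : Type*} [Fintype ι] (hr : 0 < r) {X : ι → Finset κ}
    {Q : Finset κ} {N : ℕ} (hX : Pairwise (Disjoint on X)) (hXQ : ∀ i, X i ⊆ Q)
    (hN : ∀ i, #(X i) ≤ N) (f : κ → ℝ≥0∞) :
    (∑ i, (∑ q ∈ X i, f q) ^ r) ^ (1 / r) ≤ N * (∑ q ∈ Q, f q ^ r) ^ (1 / r) := by
  classical
  have hblock : ∀ i, (∑ q ∈ X i, f q) ^ r ≤ (N : ℝ≥0∞) ^ r * ∑ q ∈ X i, f q ^ r := fun i =>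
    calc (∑ q ∈ X i, f q) ^ r ≤ ((N : ℝ≥0∞) * (∑ q ∈ X i, f q ^ r) ^ (1 / r)) ^ r := by
          gcongr
          exact (sum_le_card_mul_rpow_sum_rpow hr _ f).trans (by gcongr; exact_mod_cast hN i)
      _ = (N : ℝ≥0∞) ^ r * ∑ q ∈ X i, f q ^ r := by
          rw [ENNReal.mul_rpow_of_nonneg _ _ hr.le, one_div, ENNReal.rpow_inv_rpow hr.ne']
  have hunion : ∑ i, ∑ q ∈ X i, f q ^ r ≤ ∑ q ∈ Q, f q ^ r := by
    rw [← sum_biUnion fun i _ j _ hij => hX hij]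
    exact sum_le_sum_of_subset (biUnion_subset.mpr fun i _ => hXQ i)
  calc (∑ i, (∑ q ∈ X i, f q) ^ r) ^ (1 / r)
      ≤ ((N : ℝ≥0∞) ^ r * ∑ q ∈ Q, f q ^ r) ^ (1 / r) := by
        gcongr
        calc ∑ i, (∑ q ∈ X i, f q) ^ r ≤ ∑ i, (N : ℝ≥0∞) ^ r * ∑ q ∈ X i, f q ^ r :=
              sum_le_sum fun i _ => hblock i
          _ ≤ (N : ℝ≥0∞) ^ r * ∑ q ∈ Q, f q ^ r := by rw [← mul_sum]; gcongr
    _ = N * (∑ q ∈ Q, f q ^ r) ^ (1 / r) := by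
        rw [ENNReal.mul_rpow_of_nonneg _ _ (by positivity), one_div,
          ENNReal.rpow_rpow_inv hr.ne']

end ENNReal

theorem vNorm_le_two_mul_of_variation_le {r : ℝ} (hr : 0 < r) {K : ℕ} {c : ℕ → ℂ} (hc : c 0 = 0)
    {B : ℝ≥0∞}
    (hB : ∀ (J : ℕ) (u : Fin (J + 1) → ℕ), Monotone u → (∀ j, u j ≤ K) →
      (∑ j : Fin J, (‖c (u j.succ) - c (u j.castSucc)‖₊ : ℝ≥0∞) ^ r) ^ (1 / r) ≤ B) :
    vNorm r (fun k : Fin K => c (k + 1)) ≤ 2 * B := by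
  rw [vNorm, two_mul]
  gcongr
  · refine iSup_le fun k => ?_
    have hu : Monotone ![0, (k : ℕ) + 1] := by
      refine Fin.monotone_iff_le_succ.mpr fun i => ?_
      fin_cases i; simp
    simpa [hc, one_div, ENNReal.rpow_rpow_inv hr.ne'] using
      hB 1 ![0, (k : ℕ) + 1] hu (fun j => by fin_cases j <;> simp)
  · refine iSup₂_le fun J t => iSup_le fun ht => ?_
    exact hB J (fun j => t j + 1) (fun i j hij => by simpa using ht hij) (fun j => (t j).isLt)

theorem sum_dyadicBlocks_doubleDiff (a : ℕ → ℕ → ℂ) (n : ℕ) {t₁ t₁' t₂ t₂' : ℕ}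
    (h₁ : t₁ ≤ t₁') (h₁' : t₁' < 2 ^ n) (h₂ : t₂ ≤ t₂') (h₂' : t₂' < 2 ^ n) :
    ∑ i₁ ∈ range n, ∑ i₂ ∈ range n, ∑ q ∈ dyadicBlocks i₁ t₁ t₁' ×ˢ dyadicBlocks i₂ t₂ t₂',
      doubleDiff a (2 ^ i₁) q.1 (2 ^ i₂) q.2 = a t₁' t₂' - a t₁ t₂' - a t₁' t₂ + a t₁ t₂ := by
  calc _ = ∑ i₁ ∈ range n, ∑ j₁ ∈ dyadicBlocks i₁ t₁ t₁',
        ∑ i₂ ∈ range n, ∑ j₂ ∈ dyadicBlocks i₂ t₂ t₂',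
          ((a (2 ^ i₁ * j₁) (2 ^ i₂ * j₂) - a (2 ^ i₁ * (j₁ - 1)) (2 ^ i₂ * j₂)) -
            (a (2 ^ i₁ * j₁) (2 ^ i₂ * (j₂ - 1)) - a (2 ^ i₁ * (j₁ - 1)) (2 ^ i₂ * (j₂ - 1)))) := by
        refine sum_congr rfl fun i₁ _ => ?_
        simp_rw [sum_product]
        rw [sum_comm]
        simp only [doubleDiff, sub_sub_sub_eq, sub_add]
    _ = ∑ i₁ ∈ range n, ∑ j₁ ∈ dyadicBlocks i₁ t₁ t₁',
          ((a (2 ^ i₁ * j₁) t₂' - a (2 ^ i₁ * j₁) t₂) -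
            (a (2 ^ i₁ * (j₁ - 1)) t₂' - a (2 ^ i₁ * (j₁ - 1)) t₂)) :=
        sum_congr rfl fun i₁ _ => sum_congr rfl fun j₁ _ =>
          (sum_dyadicBlocks_sub n h₂ h₂' fun y => a (2 ^ i₁ * j₁) y - a (2 ^ i₁ * (j₁ - 1)) y).trans
            (sub_sub_sub_comm _ _ _ _)
    _ = _ := by
        rw [sum_dyadicBlocks_sub n h₁ h₁' fun x => a x t₂' - a x t₂]
        ring

theorem diag_sub_eq_sum_doubleDiff {a : ℕ → ℕ → ℂ} (ha₁ : ∀ k, a 0 k = 0)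
    (ha₂ : ∀ k, a k 0 = 0) (n : ℕ) {u u' : ℕ} (h : u ≤ u') (hu' : u' < 2 ^ n) :
    a u' u' - a u u = ∑ i₁ ∈ range n, ∑ i₂ ∈ range n,
      ((∑ q ∈ dyadicBlocks i₁ u u' ×ˢ dyadicBlocks i₂ 0 u',
          doubleDiff a (2 ^ i₁) q.1 (2 ^ i₂) q.2) +
        ∑ q ∈ dyadicBlocks i₁ 0 u ×ˢ dyadicBlocks i₂ u u',
          doubleDiff a (2 ^ i₁) q.1 (2 ^ i₂) q.2) := by
  simp only [sum_add_distrib]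
  rw [sum_dyadicBlocks_doubleDiff a n h hu' (Nat.zero_le _) hu',
    sum_dyadicBlocks_doubleDiff a n (Nat.zero_le _) (h.trans_lt hu') h hu', ha₁, ha₁, ha₂, ha₂]
  ring

noncomputable def scaleNorm (r : ℝ) (K : ℕ) (a : ℕ → ℕ → ℂ) (i₁ i₂ : ℕ) : ℝ≥0∞ :=
  (∑ q ∈ Icc 1 (K / 2 ^ i₁) ×ˢ Icc 1 (K / 2 ^ i₂),
    (‖doubleDiff a (2 ^ i₁) q.1 (2 ^ i₂) q.2‖₊ : ℝ≥0∞) ^ r) ^ (1 / r)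

theorem ite_eq_scaleNorm {r : ℝ} (hr : 0 < r) (K : ℕ) (a : ℕ → ℕ → ℂ) (i₁ i₂ : ℕ) :
    (if 2 ^ i₁ ≤ K ∧ 2 ^ i₂ ≤ K then
      (∑ j₁ ∈ Icc 1 (K / 2 ^ i₁), ∑ j₂ ∈ Icc 1 (K / 2 ^ i₂),
        (‖doubleDiff a (2 ^ i₁) j₁ (2 ^ i₂) j₂‖₊ : ℝ≥0∞) ^ r) ^ (1 / r)
    else 0) = scaleNorm r K a i₁ i₂ := by
  rw [scaleNorm, sum_product]
  split_ifs with h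
  · rfl
  · have : K / 2 ^ i₁ = 0 ∨ K / 2 ^ i₂ = 0 := by
      rw [Nat.div_eq_zero_iff_lt (by positivity), Nat.div_eq_zero_iff_lt (by positivity)]
      omega
    rcases this with h₀ | h₀ <;> simp [h₀, ENNReal.zero_rpow_of_pos, hr]

theorem diag_variation_le_eight_mul_sum_scaleNorm {r : ℝ} (hr : 1 ≤ r) {K : ℕ} {a : ℕ → ℕ → ℂ} (ha₁ : ∀ k, a 0 k = 0)
    (ha₂ : ∀ k, a k 0 = 0) {J : ℕ} (u : Fin (J + 1) → ℕ) (hu : Monotone u) (huK : ∀ j, u j ≤ K) :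
    (∑ j : Fin J, (‖a (u j.succ) (u j.succ) - a (u j.castSucc) (u j.castSucc)‖₊ : ℝ≥0∞) ^ r)
        ^ (1 / r) ≤ 8 * ∑ i₁ ∈ range (K + 1), ∑ i₂ ∈ range (K + 1), scaleNorm r K a i₁ i₂ := by
  have hr₀ : 0 < r := zero_lt_one.trans_le hr
  let f (i₁ i₂ : ℕ) (q : ℕ × ℕ) : ℝ≥0∞ := ‖doubleDiff a (2 ^ i₁) q.1 (2 ^ i₂) q.2‖₊
  let X₁ (i₁ i₂ : ℕ) (j : Fin J) : Finset (ℕ × ℕ) :=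
    dyadicBlocks i₁ (u j.castSucc) (u j.succ) ×ˢ dyadicBlocks i₂ 0 (u j.succ)
  let X₂ (i₁ i₂ : ℕ) (j : Fin J) : Finset (ℕ × ℕ) :=
    dyadicBlocks i₁ 0 (u j.castSucc) ×ˢ dyadicBlocks i₂ (u j.castSucc) (u j.succ)
  have hstep (j : Fin J) : (‖a (u j.succ) (u j.succ) - a (u j.castSucc) (u j.castSucc)‖₊ : ℝ≥0∞)
      ≤ ∑ i₁ ∈ range (K + 1), ∑ i₂ ∈ range (K + 1),
          (∑ q ∈ X₁ i₁ i₂ j, f i₁ i₂ q + ∑ q ∈ X₂ i₁ i₂ j, f i₁ i₂ q) := by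
    rw [diag_sub_eq_sum_doubleDiff ha₁ ha₂ (K + 1) (hu (Fin.castSucc_le_succ j))
      ((huK _).trans_lt ((Nat.lt_succ_self K).trans Nat.lt_two_pow_self)), ← enorm_eq_nnnorm]
    refine (enorm_sum_le _ _).trans (sum_le_sum fun i₁ _ => (enorm_sum_le _ _).trans
      (sum_le_sum fun i₂ _ => (enorm_add_le _ _).trans (add_le_add ?_ ?_))) <;>
    exact (enorm_sum_le _ _).trans_eq (sum_congr rfl fun q _ => enorm_eq_nnnorm _)
  have hcard {i₁ i₂ t₁ t₁' t₂ t₂' : ℕ} :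
      #(dyadicBlocks i₁ t₁ t₁' ×ˢ dyadicBlocks i₂ t₂ t₂') ≤ 4 :=
    (card_product _ _).trans_le
      (Nat.mul_le_mul (card_dyadicBlocks_le_two _ _ _) (card_dyadicBlocks_le_two _ _ _))
  have hsub {i₁ i₂ t₁ t₁' t₂ t₂' : ℕ} (h₁ : t₁' ≤ K) (h₂ : t₂' ≤ K) :
      dyadicBlocks i₁ t₁ t₁' ×ˢ dyadicBlocks i₂ t₂ t₂' ⊆ Icc 1 (K / 2 ^ i₁) ×ˢ Icc 1 (K / 2 ^ i₂) :=
    product_subset_product (dyadicBlocks_subset_Icc h₁) (dyadicBlocks_subset_Icc h₂)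
  have hX₁ (i₁ i₂ : ℕ) : (∑ j, (∑ q ∈ X₁ i₁ i₂ j, f i₁ i₂ q) ^ r) ^ (1 / r) ≤
      4 * scaleNorm r K a i₁ i₂ := by
    exact_mod_cast ENNReal.Lp_sum_blocks_le hr₀
      (fun j j' h => disjoint_product.mpr (.inl (pairwise_disjoint_dyadicBlocks hu i₁ h)))
      (fun j => hsub (huK _) (huK _)) (fun j => hcard) (f i₁ i₂)
  have hX₂ (i₁ i₂ : ℕ) : (∑ j, (∑ q ∈ X₂ i₁ i₂ j, f i₁ i₂ q) ^ r) ^ (1 / r) ≤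
      4 * scaleNorm r K a i₁ i₂ := by
    exact_mod_cast ENNReal.Lp_sum_blocks_le hr₀
      (fun j j' h => disjoint_product.mpr (.inr (pairwise_disjoint_dyadicBlocks hu i₂ h)))
      (fun j => hsub (huK _) (huK _)) (fun j => hcard) (f i₁ i₂)
  calc _ ≤ (∑ j, (∑ i₁ ∈ range (K + 1), ∑ i₂ ∈ range (K + 1),
          (∑ q ∈ X₁ i₁ i₂ j, f i₁ i₂ q + ∑ q ∈ X₂ i₁ i₂ j, f i₁ i₂ q)) ^ r) ^ (1 / r) := by
        gcongr with j
        exact hstep j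
    _ ≤ ∑ i₁ ∈ range (K + 1), (∑ j, (∑ i₂ ∈ range (K + 1),
          (∑ q ∈ X₁ i₁ i₂ j, f i₁ i₂ q + ∑ q ∈ X₂ i₁ i₂ j, f i₁ i₂ q)) ^ r) ^ (1 / r) :=
        ENNReal.Lp_sum_le hr _ _ _
    _ ≤ ∑ i₁ ∈ range (K + 1), ∑ i₂ ∈ range (K + 1), (∑ j,
          (∑ q ∈ X₁ i₁ i₂ j, f i₁ i₂ q + ∑ q ∈ X₂ i₁ i₂ j, f i₁ i₂ q) ^ r) ^ (1 / r) :=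
        sum_le_sum fun i₁ _ => ENNReal.Lp_sum_le hr _ _ _
    _ ≤ ∑ i₁ ∈ range (K + 1), ∑ i₂ ∈ range (K + 1),
          (4 * scaleNorm r K a i₁ i₂ + 4 * scaleNorm r K a i₁ i₂) :=
        sum_le_sum fun i₁ _ => sum_le_sum fun i₂ _ =>
          (ENNReal.Lp_add_le _ _ _ hr).trans (add_le_add (hX₁ i₁ i₂) (hX₂ i₁ i₂))
    _ = 8 * ∑ i₁ ∈ range (K + 1), ∑ i₂ ∈ range (K + 1), scaleNorm r K a i₁ i₂ := by
        simp_rw [mul_sum, ← two_mul, ← mul_assoc]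
        norm_num

/-- Two-dimensional Rademacher–Menshov inequality: with the convention
`a_{k₁,k₂} = 0` when `k₁ = 0` or `k₂ = 0`, for `1 < r < ∞`,
`‖(a_{k,k})_{k∈[K]}‖_{V^r} ≲_r
  Σ_{M₁,M₂ dyadic ≤ K} ‖(Δa_{M₁j₁,M₂j₂})_{(j₁,j₂)∈[K/M₁]×[K/M₂]}‖_{ℓ^r}`. -/
theorem stmt3 (r : ℝ) (hr : 1 < r) :
    ∃ C : ℝ≥0∞, 0 < C ∧ C ≠ ⊤ ∧
      ∀ (K : ℕ), 0 < K → ∀ (a : ℕ → ℕ → ℂ),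
        (∀ k, a 0 k = 0) → (∀ k, a k 0 = 0) →
        vNorm r (fun k : Fin K => a ((k : ℕ) + 1) ((k : ℕ) + 1)) ≤
          C * ∑ i₁ ∈ Finset.range (K + 1), ∑ i₂ ∈ Finset.range (K + 1),
            (if 2 ^ i₁ ≤ K ∧ 2 ^ i₂ ≤ K then
              (∑ j₁ ∈ Finset.Icc 1 (K / 2 ^ i₁), ∑ j₂ ∈ Finset.Icc 1 (K / 2 ^ i₂),
                (‖doubleDiff a (2 ^ i₁) j₁ (2 ^ i₂) j₂‖₊ : ℝ≥0∞) ^ r) ^ (1 / r)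
            else 0) := by
  have hr₀ : 0 < r := zero_lt_one.trans hr
  refine ⟨16, by norm_num, by norm_num, fun K _ a ha₁ ha₂ => ?_⟩
  simp_rw [ite_eq_scaleNorm hr₀]
  calc _ ≤ 2 * (8 * ∑ i₁ ∈ range (K + 1), ∑ i₂ ∈ range (K + 1), scaleNorm r K a i₁ i₂) :=
        vNorm_le_two_mul_of_variation_le hr₀ (c := fun k => a k k) (ha₁ 0)
          fun J u hu huK => diag_variation_le_eight_mul_sum_scaleNorm hr.le ha₁ ha₂ u hu huK
    _ = _ := by rw [← mul_assoc]; norm_num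
end

section
/- Smooth approximation to interval indicators: Let ψ : ℝ → ℂ be a Schwartz function with ∫_ℝ ψ(x) dx = 1. Then for any interval [a,b] ⊂ ℝ and any 0 < ε ≤ 1, one has the pointwise bound |Σ_{y∈[a,b]∩ℤ} ε·ψ(ε(x−y)) − 1_{[a,b]}(x)| ≲_ψ ε^{10} + ⟨ε(x−a)⟩^{−10} + ⟨ε(x−b)⟩^{−10} for all x ∈ ℤ. -/
open MeasureTheory
open scoped Real FourierTransform SchwartzMap

/-!
Put `F y = ε ψ(ε (x - y))`. By Poisson summation `∑_{y ∈ ℤ} F y = ∑_n ψ̂(n / ε)`; the term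
`n = 0` is `ψ̂ 0 = ∫ ψ = 1`, and the rapid decay of `ψ̂` makes the others `O(ε^10)`. Cutting the
sum down to `[a, b]` and subtracting `1_{[a,b]}(x)` therefore leaves, up to `O(ε^10)`, only the
terms with `y` and `x` on different sides of `a` or of `b`, where `|x - y| ≥ |x - a|` or
`|x - y| ≥ |x - b|`. There the decay of `ψ` bounds `|F y|` by `⟨ε(x-a)⟩^{-10} + ⟨ε(x-b)⟩^{-10}`
times the kernel `ε ⟨ε(x-y)⟩^{-2}`, whose sum over `y ∈ ℤ` is bounded uniformly in `ε` by
comparison with `∫ ε ⟨ε t⟩^{-2} dt = π` (telescoping `arctan`).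
-/

lemma sub_div_one_add_sq_le_arctan_sub_arctan {c d : ℝ} (hd : 0 ≤ d) (hdc : d ≤ c) :
    (c - d) / (1 + c ^ 2) ≤ Real.arctan c - Real.arctan d := by
  rcases hdc.eq_or_lt with rfl | hlt
  · simp
  obtain ⟨ξ, hξ, hslope⟩ := exists_hasDerivAt_eq_slope Real.arctan (fun x => 1 / (1 + x ^ 2)) hlt
    Real.continuous_arctan.continuousOn (fun x _ => Real.hasDerivAt_arctan x)
  rw [eq_div_iff (sub_ne_zero.2 hlt.ne')] at hslope
  have : ξ ^ 2 ≤ c ^ 2 := by nlinarith [hξ.1, hξ.2]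
  rw [← hslope, div_eq_mul_one_div, mul_comm]
  gcongr

lemma sum_range_mul_inv_one_add_sq_succ_le {ε : ℝ} (hε : 0 ≤ ε) (N : ℕ) :
    ∑ m ∈ Finset.range N, ε * (1 + (ε * (m + 1)) ^ 2)⁻¹ ≤ 2 := by
  calc ∑ m ∈ Finset.range N, ε * (1 + (ε * (m + 1)) ^ 2)⁻¹
      ≤ ∑ m ∈ Finset.range N, (Real.arctan (ε * (m + 1 : ℕ)) - Real.arctan (ε * m)) := by
        gcongr with m
        have := sub_div_one_add_sq_le_arctan_sub_arctan (c := ε * (m + 1)) (d := ε * m)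
          (by positivity) (by nlinarith)
        push_cast
        exact le_of_eq_of_le (by ring) this
    _ = Real.arctan (ε * N) := by
        rw [Finset.sum_range_sub (fun m : ℕ => Real.arctan (ε * m))]
        simp
    _ ≤ 2 := (Real.arctan_lt_pi_div_two _).le.trans (by linarith [Real.pi_le_four])

lemma summable_nat_mul_inv_one_add_sq_succ {ε : ℝ} (hε : 0 ≤ ε) :
    Summable fun n : ℕ => ε * (1 + (ε * (n + 1)) ^ 2)⁻¹ :=
  summable_of_sum_range_le (fun _ => by positivity) (sum_range_mul_inv_one_add_sq_succ_le hε)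

lemma hasSum_int_mul_inv_one_add_sq {ε : ℝ} (hε : 0 ≤ ε) :
    HasSum (fun m : ℤ => ε * (1 + (ε * m) ^ 2)⁻¹)
      (∑' n : ℕ, ε * (1 + (ε * (n + 1)) ^ 2)⁻¹ + ε + ∑' n : ℕ, ε * (1 + (ε * (n + 1)) ^ 2)⁻¹) := by
  have h := (summable_nat_mul_inv_one_add_sq_succ hε).hasSum
  convert HasSum.of_add_one_of_neg_add_one (f := fun m : ℤ => ε * (1 + (ε * m) ^ 2)⁻¹)
    (h.congr_fun fun n => ?_) (h.congr_fun fun n => ?_) using 2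
  · simp
  · push_cast; ring
  · push_cast; ring

lemma summable_int_mul_inv_one_add_sq {ε : ℝ} (hε : 0 ≤ ε) :
    Summable fun m : ℤ => ε * (1 + (ε * m) ^ 2)⁻¹ :=
  (hasSum_int_mul_inv_one_add_sq hε).summable

lemma tsum_int_mul_inv_one_add_sq_le {ε : ℝ} (hε : 0 ≤ ε) :
    ∑' m : ℤ, ε * (1 + (ε * m) ^ 2)⁻¹ ≤ ε + 4 := by
  have := Real.tsum_le_of_sum_range_le (fun _ => by positivity)
    (sum_range_mul_inv_one_add_sq_succ_le hε)
  rw [(hasSum_int_mul_inv_one_add_sq hε).tsum_eq]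
  linarith

lemma Summable.comp_int_sub {E : Type*} [AddCommMonoid E] [TopologicalSpace E] {f : ℝ → E}
    (hf : Summable fun m : ℤ => f m) (x : ℤ) : Summable fun y : ℤ => f (x - y) := by
  simpa [Function.comp_def] using (Equiv.subLeft x).summable_iff.2 hf

lemma tsum_int_comp_sub {E : Type*} [AddCommMonoid E] [TopologicalSpace E] (f : ℝ → E) (x : ℤ) :
    ∑' y : ℤ, f (x - y) = ∑' m : ℤ, f m := by
  simpa using (Equiv.subLeft x).tsum_eq (fun m : ℤ => f m)

lemma SchwartzMap.exists_norm_le_mul_inv_one_add_sq_pow {E F : Type*} [NormedAddCommGroup E]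
    [NormedSpace ℝ E] [NormedAddCommGroup F] [NormedSpace ℝ F] (f : 𝓢(E, F)) (k : ℕ) :
    ∃ D, 0 ≤ D ∧ ∀ x, ‖f x‖ ≤ D * ((1 + ‖x‖ ^ 2) ^ k)⁻¹ := by
  refine ⟨2 ^ (2 * k) * (Finset.Iic (2 * k, 0)).sup (fun m => SchwartzMap.seminorm ℝ m.1 m.2) f,
    by positivity, fun x => ?_⟩
  have h := SchwartzMap.one_add_le_sup_seminorm_apply (𝕜 := ℝ) (m := (2 * k, 0)) le_rfl le_rfl f x
  rw [norm_iteratedFDeriv_zero] at h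
  have hpow : (1 + ‖x‖ ^ 2) ^ k ≤ (1 + ‖x‖) ^ (2 * k) := by
    rw [pow_mul]
    gcongr
    nlinarith [norm_nonneg x]
  rw [← div_eq_mul_inv, le_div_iff₀ (by positivity)]
  calc ‖f x‖ * (1 + ‖x‖ ^ 2) ^ k ≤ (1 + ‖x‖) ^ (2 * k) * ‖f x‖ := by
        rw [mul_comm]
        gcongr
    _ ≤ _ := h

lemma norm_le_mul_inv_one_add_sq_of_sq_le {E : Type*} [SeminormedAddCommGroup E] {f : ℝ → E}
    {D : ℝ} (hD : 0 ≤ D) {k : ℕ} (hf : ∀ t, ‖f t‖ ≤ D * ((1 + t ^ 2) ^ (k + 1))⁻¹) {r s : ℝ}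
    (h : r ^ 2 ≤ s ^ 2) : ‖f s‖ ≤ D * ((1 + r ^ 2) ^ k)⁻¹ * (1 + s ^ 2)⁻¹ := by
  refine (hf s).trans ?_
  rw [mul_assoc, ← mul_inv, pow_succ]
  gcongr

lemma inv_one_add_div_sq_pow_succ_le {n ε : ℝ} (hε : 0 < ε) (hε1 : ε ≤ 1) (hn : 1 ≤ n ^ 2)
    (k : ℕ) : ((1 + (n / ε) ^ 2) ^ (k + 1))⁻¹ ≤ ε ^ (2 * k) * (1 + n ^ 2)⁻¹ := by
  have hdiv : (n / ε) ^ 2 = n ^ 2 / ε ^ 2 := div_pow n ε 2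
  have h1 : n ^ 2 ≤ (n / ε) ^ 2 := by
    rw [hdiv, le_div_iff₀ (by positivity)]
    nlinarith [pow_le_one₀ hε.le hε1 (n := 2)]
  have h2 : (ε ^ 2)⁻¹ ≤ 1 + (n / ε) ^ 2 := by
    rw [hdiv, div_eq_mul_inv]
    nlinarith [inv_nonneg.2 (pow_nonneg hε.le 2)]
  rw [pow_mul, ← inv_inv ((ε ^ 2) ^ k), ← mul_inv, pow_succ, ← inv_pow]
  gcongr

lemma Real.fourier_comp_mul_left {E : Type*} [NormedAddCommGroup E] [NormedSpace ℂ E]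
    (f : ℝ → E) {c : ℝ} (hc : c ≠ 0) (ξ : ℝ) :
    𝓕 (fun t => f (c * t)) ξ = |c⁻¹| • 𝓕 f (ξ / c) := by
  simp only [Real.fourier_real_eq]
  rw [← Measure.integral_comp_mul_left (fun v => 𝐞 (-(v * (ξ / c))) • f v) c]
  congr with v
  field_simp

lemma Real.fourier_apply_zero {E : Type*} [NormedAddCommGroup E] [NormedSpace ℂ E]
    (f : ℝ → E) : 𝓕 f 0 = ∫ x, f x := by
  simp [Real.fourier_real_eq]

lemma SchwartzMap.tsum_int_comp_mul_eq (f : 𝓢(ℝ, ℂ)) {c : ℝ} (hc : c ≠ 0) :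
    ∑' m : ℤ, f (c * m) = |c⁻¹| • ∑' n : ℤ, 𝓕 f (n / c) := by
  set g := SchwartzMap.compCLMOfContinuousLinearEquiv ℂ
    (ContinuousLinearEquiv.unitsEquivAut ℝ (Units.mk0 c hc)) f
  have hg : (g : ℝ → ℂ) = fun t => f (c * t) := by
    ext t
    simp [g, mul_comm]
  have hpoisson := g.tsum_eq_tsum_fourier 0
  simp only [zero_add, QuotientAddGroup.mk_zero, fourier_eval_zero, mul_one,
    SchwartzMap.fourier_coe, hg] at hpoisson
  simp only [hpoisson, Real.fourier_comp_mul_left _ hc, tsum_const_smul'']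
  rfl

lemma SchwartzMap.exists_norm_tsum_int_div_sub_le {F : Type*} [NormedAddCommGroup F]
    [NormedSpace ℝ F] [CompleteSpace F] (φ : 𝓢(ℝ, F)) (k : ℕ) :
    ∃ C, 0 ≤ C ∧ ∀ ε : ℝ, 0 < ε → ε ≤ 1 → ‖∑' n : ℤ, φ (n / ε) - φ 0‖ ≤ C * ε ^ (2 * k) := by
  obtain ⟨D, hD, hφ⟩ := φ.exists_norm_le_mul_inv_one_add_sq_pow (k + 1)
  refine ⟨5 * D, by positivity, fun ε hε hε1 => ?_⟩
  have hone : Summable fun n : ℤ => (1 + (n : ℝ) ^ 2)⁻¹ := by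
    simpa using summable_int_mul_inv_one_add_sq zero_le_one
  have hsum := hone.hasSum.mul_left (D * ε ^ (2 * k))
  have hterm : ∀ n : ℤ, ‖φ (n / ε) - if n = 0 then φ 0 else 0‖ ≤
      D * ε ^ (2 * k) * (1 + (n : ℝ) ^ 2)⁻¹ := by
    intro n
    by_cases hn : n = 0
    · simp only [hn, if_true, Int.cast_zero, zero_div, sub_self, norm_zero]
      positivity
    have hn1 : 1 ≤ (n : ℝ) ^ 2 := by
      rw [one_le_sq_iff_one_le_abs, ← Int.cast_abs]
      exact_mod_cast Int.one_le_abs hn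
    rw [if_neg hn, sub_zero, mul_assoc]
    calc ‖φ (n / ε)‖ ≤ D * ((1 + (n / ε) ^ 2) ^ (k + 1))⁻¹ := by
          simpa only [Real.norm_eq_abs, sq_abs] using hφ (n / ε)
      _ ≤ D * (ε ^ (2 * k) * (1 + (n : ℝ) ^ 2)⁻¹) := by
          gcongr
          exact inv_one_add_div_sq_pow_succ_le hε hε1 hn1 k
  have hdiff := (hsum.summable.of_norm_bounded hterm).hasSum
  have htsum : ∑' n : ℤ, φ (n / ε) - φ 0 = ∑' n : ℤ, (φ (n / ε) - if n = 0 then φ 0 else 0) := by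
    rw [((hdiff.add (hasSum_ite_eq 0 (φ 0))).congr_fun fun n => by simp).tsum_eq]
    exact add_sub_cancel_right _ _
  rw [htsum]
  refine (tsum_of_norm_bounded hsum hterm).trans ?_
  have h5 : ∑' n : ℤ, (1 + (n : ℝ) ^ 2)⁻¹ ≤ 1 + 4 := by
    simpa using tsum_int_mul_inv_one_add_sq_le zero_le_one
  nlinarith [mul_le_mul_of_nonneg_left h5 (by positivity : 0 ≤ D * ε ^ (2 * k))]

lemma SchwartzMap.exists_norm_tsum_int_mul_comp_mul_sub_integral_le (ψ : 𝓢(ℝ, ℂ)) :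
    ∃ C, 0 ≤ C ∧ ∀ ε : ℝ, 0 < ε → ε ≤ 1 →
      ‖∑' m : ℤ, (ε : ℂ) * ψ (ε * m) - ∫ x, ψ x‖ ≤ C * ε ^ 10 := by
  obtain ⟨C, hC, h⟩ := (𝓕 ψ).exists_norm_tsum_int_div_sub_le 5
  refine ⟨C, hC, fun ε hε hε1 => ?_⟩
  have hscale : ∀ z : ℂ, (ε : ℂ) * |ε⁻¹| • z = z := fun z => by
    rw [Complex.real_smul, ← mul_assoc, ← Complex.ofReal_mul, abs_inv, abs_of_pos hε,
      mul_inv_cancel₀ hε.ne', Complex.ofReal_one, one_mul]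
  rw [tsum_mul_left, ψ.tsum_int_comp_mul_eq hε.ne', hscale, ← Real.fourier_apply_zero]
  exact h ε hε hε1

lemma sq_sub_le_or_sq_sub_le_of_mem_Icc_iff_notMem {a b x y : ℝ}
    (h : y ∈ Set.Icc a b ↔ x ∉ Set.Icc a b) :
    (x - a) ^ 2 ≤ (x - y) ^ 2 ∨ (x - b) ^ 2 ≤ (x - y) ^ 2 := by
  simp only [Set.mem_Icc] at h
  by_cases hx : a ≤ x ∧ x ≤ b
  · have hy : ¬(a ≤ y ∧ y ≤ b) := fun hy => h.1 hy hx
    rcases not_and_or.1 hy with hy | hy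
    · left; nlinarith
    · right; nlinarith
  · have hy := h.2 hx
    rcases not_and_or.1 hx with hx | hx
    · left; nlinarith
    · right; nlinarith

lemma norm_tsum_ite_sub_ite_le {ι E : Type*} [NormedAddCommGroup E] [CompleteSpace E]
    {F : ι → E} (hF : Summable F) (p : ι → Prop) [DecidablePred p] (q : Prop) [Decidable q]
    (c : E) {g : ι → ℝ} (hg : Summable g) (hg0 : ∀ i, 0 ≤ g i)
    (hFg : ∀ i, (p i ↔ ¬q) → ‖F i‖ ≤ g i) :
    ‖(∑' i, if p i then F i else 0) - (if q then c else 0)‖ ≤ ‖∑' i, F i - c‖ + ∑' i, g i := by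
  by_cases hq : q
  · have hbound : ∀ i, ‖if p i then 0 else F i‖ ≤ g i := fun i => by
      split_ifs with hp
      · simpa using hg0 i
      · exact hFg i (by tauto)
    have hsplit : ∑' i, (if p i then F i else 0) = ∑' i, F i - ∑' i, (if p i then 0 else F i) := by
      rw [← hF.tsum_sub (hg.of_norm_bounded hbound)]
      congr with i
      split_ifs <;> simp
    rw [if_pos hq, hsplit, sub_right_comm]
    exact (norm_sub_le _ _).trans (by gcongr; exact tsum_of_norm_bounded hg.hasSum hbound)
  · have hbound : ∀ i, ‖if p i then F i else 0‖ ≤ g i := fun i => by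
      split_ifs with hp
      · exact hFg i (by tauto)
      · simpa using hg0 i
    rw [if_neg hq, sub_zero]
    exact (tsum_of_norm_bounded hg.hasSum hbound).trans (le_add_of_nonneg_left (norm_nonneg _))

lemma norm_tsum_ite_mul_comp_mul_sub_ite_le {ψ : ℝ → ℂ} {D : ℝ} (hD : 0 ≤ D)
    (hdecay : ∀ t, ‖ψ t‖ ≤ D * ((1 + t ^ 2) ^ (5 + 1))⁻¹) {ε : ℝ} (hε : 0 < ε) (hε1 : ε ≤ 1)
    (a b : ℝ) (x : ℤ) :
    ‖(∑' y : ℤ, if a ≤ (y : ℝ) ∧ (y : ℝ) ≤ b then (ε : ℂ) * ψ (ε * ((x : ℝ) - (y : ℝ))) else 0)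
        - (if a ≤ (x : ℝ) ∧ (x : ℝ) ≤ b then 1 else 0)‖ ≤
      ‖∑' m : ℤ, (ε : ℂ) * ψ (ε * m) - 1‖ + 5 * D * (((1 + (ε * ((x : ℝ) - a)) ^ 2) ^ 5)⁻¹ +
        ((1 + (ε * ((x : ℝ) - b)) ^ 2) ^ 5)⁻¹) := by
  set K : ℤ → ℝ := fun y => ε * (1 + (ε * ((x : ℝ) - y)) ^ 2)⁻¹
  have hK : Summable K :=
    (summable_int_mul_inv_one_add_sq hε.le).comp_int_sub (f := fun t => ε * (1 + (ε * t) ^ 2)⁻¹) x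
  have hK5 : ∑' y, K y ≤ 5 := by
    rw [tsum_int_comp_sub (fun t => ε * (1 + (ε * t) ^ 2)⁻¹) x]
    linarith [tsum_int_mul_inv_one_add_sq_le hε.le]
  have hnear : ∀ (y : ℤ) (r : ℝ), ((x : ℝ) - r) ^ 2 ≤ ((x : ℝ) - y) ^ 2 →
      ‖(ε : ℂ) * ψ (ε * ((x : ℝ) - y))‖ ≤ D * ((1 + (ε * ((x : ℝ) - r)) ^ 2) ^ 5)⁻¹ * K y := by
    intro y r hr
    rw [norm_mul, Complex.norm_real, Real.norm_of_nonneg hε.le, mul_left_comm]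
    gcongr
    exact norm_le_mul_inv_one_add_sq_of_sq_le hD hdecay
      (by rw [mul_pow, mul_pow]; exact mul_le_mul_of_nonneg_left hr (sq_nonneg ε))
  have hF : Summable fun y : ℤ => (ε : ℂ) * ψ (ε * ((x : ℝ) - y)) :=
    (hK.mul_left D).of_norm_bounded fun y => by simpa using hnear y x (by simpa using sq_nonneg _)
  set wa := ((1 + (ε * ((x : ℝ) - a)) ^ 2) ^ 5)⁻¹
  set wb := ((1 + (ε * ((x : ℝ) - b)) ^ 2) ^ 5)⁻¹
  have hfar : ∀ y : ℤ, (a ≤ (y : ℝ) ∧ (y : ℝ) ≤ b ↔ ¬(a ≤ (x : ℝ) ∧ (x : ℝ) ≤ b)) →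
      ‖(ε : ℂ) * ψ (ε * ((x : ℝ) - y))‖ ≤ D * (wa + wb) * K y := by
    intro y hy
    rcases sq_sub_le_or_sq_sub_le_of_mem_Icc_iff_notMem hy with h | h
    · refine (hnear y a h).trans ?_
      gcongr
      exact le_add_of_nonneg_right (by positivity)
    · refine (hnear y b h).trans ?_
      gcongr
      exact le_add_of_nonneg_left (by positivity)
  calc _ ≤ ‖∑' y : ℤ, (ε : ℂ) * ψ (ε * ((x : ℝ) - y)) - 1‖ + ∑' y, D * (wa + wb) * K y :=
        norm_tsum_ite_sub_ite_le hF _ _ 1 (hK.mul_left _) (fun y => by positivity) hfar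
    _ ≤ ‖∑' m : ℤ, (ε : ℂ) * ψ (ε * m) - 1‖ + 5 * D * (wa + wb) := by
        rw [tsum_int_comp_sub (fun t => (ε : ℂ) * ψ (ε * t)) x, tsum_mul_left (a := D * (wa + wb))]
        nlinarith [mul_le_mul_of_nonneg_left hK5 (by positivity : 0 ≤ D * (wa + wb))]

/-- Smooth approximation to interval indicators: if `ψ` is a Schwartz function with
`∫ ψ = 1`, then for any interval `[a,b]`, `0 < ε ≤ 1` and `x ∈ ℤ`,
`|Σ_{y∈[a,b]∩ℤ} ε ψ(ε(x−y)) − 1_{[a,b]}(x)| ≲_ψ ε^{10} + ⟨ε(x−a)⟩^{−10} + ⟨ε(x−b)⟩^{−10}`. -/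
theorem stmt7 (ψ : SchwartzMap ℝ ℂ) (hψ : ∫ x : ℝ, ψ x = 1) :
    ∃ C : ℝ, 0 < C ∧
      ∀ (a b : ℝ), a ≤ b → ∀ (ε : ℝ), 0 < ε → ε ≤ 1 → ∀ x : ℤ,
        ‖(∑' y : ℤ, if a ≤ (y : ℝ) ∧ (y : ℝ) ≤ b then (ε : ℂ) * ψ (ε * ((x : ℝ) - (y : ℝ))) else 0)
            - (if a ≤ (x : ℝ) ∧ (x : ℝ) ≤ b then 1 else 0)‖ ≤
          C * (ε ^ 10 + ((1 + (ε * ((x : ℝ) - a)) ^ 2) ^ 5)⁻¹ +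
            ((1 + (ε * ((x : ℝ) - b)) ^ 2) ^ 5)⁻¹) := by
  obtain ⟨D, hD, hdecay⟩ := ψ.exists_norm_le_mul_inv_one_add_sq_pow (5 + 1)
  obtain ⟨C, hC, hpoisson⟩ := ψ.exists_norm_tsum_int_mul_comp_mul_sub_integral_le
  refine ⟨C + 5 * D + 1, by positivity, fun a b _ ε hε hε1 x => ?_⟩
  have hdecay' : ∀ t : ℝ, ‖ψ t‖ ≤ D * ((1 + t ^ 2) ^ (5 + 1))⁻¹ := by
    simpa only [Real.norm_eq_abs, sq_abs] using hdecay
  have hwa : 0 ≤ ((1 + (ε * ((x : ℝ) - a)) ^ 2) ^ 5)⁻¹ := by positivity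
  have hwb : 0 ≤ ((1 + (ε * ((x : ℝ) - b)) ^ 2) ^ 5)⁻¹ := by positivity
  refine (norm_tsum_ite_mul_comp_mul_sub_ite_le hD hdecay' hε hε1 a b x).trans ?_
  rw [← hψ]
  nlinarith [hpoisson ε hε hε1, mul_nonneg hC (add_nonneg hwa hwb),
    mul_nonneg hD (pow_nonneg hε.le 10), pow_nonneg hε.le 10]
end

section
/- Hahn–Banach dual structure lemma: Let A, B > 0, let G ∈ ℓ²(ℤ), and let Φ be a family of vectors in ℓ²(ℤ). Assume the following inverse property: whenever f ∈ ℓ²(ℤ) satisfies ‖f‖_{ℓ^∞(ℤ)} ≤ 1 and |⟨f, G⟩| > A, then |⟨f, φ⟩| > B for some φ ∈ Φ. Then G lies in the closed convex hull (in ℓ²(ℤ)) of the set V = { λφ : φ ∈ Φ, |λ| ≤ A/B } ∪ { h ∈ ℓ²(ℤ) : ‖h‖_{ℓ¹(ℤ)} ≤ A }. -/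
open scoped InnerProductSpace lp

/-!
Suppose `G` is not in the closed convex hull `K` of `V`. Separating `G` from `K` by a real
functional, represented through the pairing by Riesz and normalised (the level is positive
because `0 ∈ V`), gives `f ∈ ℓ²` with `Re ⟨f, v⟩ < A` on `V`
and `Re ⟨f, G⟩ > A`. Rotating the phase of the test vectors turns the real bounds into bounds on
moduli: the `ℓ¹`-ball of radius `A` contains `A`-multiples of unit vectors, which forces
`‖f‖_∞ ≤ 1`, and the multiples `c φ` with `|c| ≤ A / B` force `|⟨f, φ⟩| < B` for every `φ ∈ Φ`.
This contradicts the inverse property applied to `f`.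
-/

theorem Complex.mul_norm_lt_of_forall_re_mul_lt {z : ℂ} {r t : ℝ} (hr : 0 ≤ r)
    (h : ∀ c : ℂ, ‖c‖ ≤ r → (c * z).re < t) : r * ‖z‖ < t := by
  set u := Complex.exp (z.arg * Complex.I)
  have hu : u ≠ 0 := Complex.exp_ne_zero _
  have hz : z = ‖z‖ * u := (Complex.norm_mul_exp_arg_mul_I z).symm
  have hc : ‖(r : ℂ) * u⁻¹‖ ≤ r := by
    rw [norm_mul, norm_inv, Complex.norm_exp_ofReal_mul_I, Complex.norm_real,
      Real.norm_of_nonneg hr, inv_one, mul_one]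
  have hcz : (r : ℂ) * u⁻¹ * z = ↑(r * ‖z‖) := by
    nth_rw 1 [hz]
    field_simp
    push_cast
    ring
  simpa [hcz] using h _ hc

namespace lp

variable {ι : Type*}

theorem exists_re_tsum_mul_eq (L : ℓ²(ι, ℂ) →L[ℝ] ℝ) :
    ∃ f : ℓ²(ι, ℂ), ∀ x, L x = (∑' i, f i * x i).re := by
  let _ : InnerProductSpace ℝ ℓ²(ι, ℂ) := InnerProductSpace.rclikeToReal ℂ ℓ²(ι, ℂ)
  set y := (InnerProductSpace.toDual ℝ _).symm L
  refine ⟨star y, fun x => ?_⟩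
  have hy : ⟪y, x⟫_ℝ = L x := InnerProductSpace.toDual_symm_apply
  have hre : ⟪y, x⟫_ℝ = (⟪y, x⟫_ℂ).re := rfl
  rw [← hy, hre, lp.inner_eq_tsum]
  simp [lp.star_apply, mul_comm]

theorem exists_re_tsum_mul_lt_of_notMem_closure_convexHull {S : Set ℓ²(ι, ℂ)} {G : ℓ²(ι, ℂ)}
    (h0 : 0 ∈ S) (hG : G ∉ closure (convexHull ℝ S)) {a : ℝ} (ha : 0 < a) :
    ∃ f : ℓ²(ι, ℂ), (∀ h ∈ S, (∑' i, f i * h i).re < a) ∧ a < (∑' i, f i * G i).re := by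
  obtain ⟨L, t, hLK, hLG⟩ :=
    geometric_hahn_banach_closed_point (convex_convexHull ℝ S).closure isClosed_closure hG
  have hLS : ∀ h ∈ S, L h < t := fun h hh => hLK h (subset_closure (subset_convexHull ℝ S hh))
  have ht : 0 < t := by simpa using hLS 0 h0
  obtain ⟨f, hf⟩ := exists_re_tsum_mul_eq ((a / t) • L)
  have hscale : ∀ x, (∑' i, f i * x i).re = a * (L x / t) := fun x => by
    rw [← hf, smul_apply, smul_eq_mul]
    ring
  refine ⟨f, fun h hh => ?_, ?_⟩
  · rw [hscale]
    exact mul_lt_of_lt_one_right ha ((div_lt_one ht).2 (hLS h hh))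
  · rw [hscale]
    exact lt_mul_of_one_lt_right ha ((one_lt_div ht).2 hLG)

theorem tsum_mul_smul (f g : ℓ²(ι, ℂ)) (c : ℂ) :
    ∑' i, f i * (c • g) i = c * ∑' i, f i * g i := by
  rw [← tsum_mul_left]
  exact tsum_congr fun i => by rw [lp.coeFn_smul, Pi.smul_apply, smul_eq_mul]; ring

variable [DecidableEq ι]

theorem hasSum_norm_single (i : ι) (c : ℂ) :
    HasSum (fun j => ‖(lp.single 2 i c : ℓ²(ι, ℂ)) j‖) ‖c‖ := by
  simpa only [lp.single_apply_self] using
    hasSum_single (f := fun j => ‖(lp.single 2 i c : ℓ²(ι, ℂ)) j‖) i fun j hj => by simp [hj]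

theorem tsum_mul_single (f : ℓ²(ι, ℂ)) (i : ι) (c : ℂ) :
    ∑' j, f j * (lp.single 2 i c : ℓ²(ι, ℂ)) j = f i * c := by
  rw [tsum_eq_single i fun j hj => by simp [hj], lp.single_apply_self]

end lp

/-- Hahn–Banach dual structure lemma: let `A, B > 0`, `G ∈ ℓ²(ℤ)`, and `Φ ⊆ ℓ²(ℤ)`.
If every `f ∈ ℓ²(ℤ)` with `‖f‖_∞ ≤ 1` and `|⟨f,G⟩| > A` satisfies `|⟨f,φ⟩| > B` for some
`φ ∈ Φ`, then `G` lies in the ℓ²-closed convex hull of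
`{λφ : φ∈Φ, |λ| ≤ A/B} ∪ {h : ‖h‖_{ℓ¹} ≤ A}`.  Here `⟨f,g⟩ = Σ_x f(x) g(x)` is the
bilinear pairing. -/
theorem stmt8 (A B : ℝ) (hA : 0 < A) (hB : 0 < B)
    (G : lp (fun _ : ℤ => ℂ) 2) (Φ : Set (lp (fun _ : ℤ => ℂ) 2))
    (hinv : ∀ f : lp (fun _ : ℤ => ℂ) 2, (∀ x : ℤ, ‖f x‖ ≤ 1) →
      A < ‖∑' x : ℤ, f x * G x‖ → ∃ φ ∈ Φ, B < ‖∑' x : ℤ, f x * φ x‖) :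
    G ∈ closure (convexHull ℝ
      ({h : lp (fun _ : ℤ => ℂ) 2 | ∃ φ ∈ Φ, ∃ c : ℂ, ‖c‖ ≤ A / B ∧ h = c • φ} ∪
        {h : lp (fun _ : ℤ => ℂ) 2 |
          Summable (fun x : ℤ => ‖h x‖) ∧ ∑' x : ℤ, ‖h x‖ ≤ A})) := by
  by_contra hG
  obtain ⟨f, hfV, hfG⟩ := lp.exists_re_tsum_mul_lt_of_notMem_closure_convexHull
    (Or.inr ⟨by simp, by simpa using hA.le⟩) hG hA
  have hf : ∀ x, ‖f x‖ ≤ 1 := fun x => by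
    have hAf := Complex.mul_norm_lt_of_forall_re_mul_lt hA.le fun c hc => by
      have hsingle := lp.hasSum_norm_single x c
      simpa only [lp.tsum_mul_single, mul_comm] using
        hfV _ (Or.inr ⟨hsingle.summable, hsingle.tsum_eq.le.trans hc⟩)
    exact ((mul_lt_iff_lt_one_right hA).1 hAf).le
  obtain ⟨φ, hφ, hBφ⟩ := hinv f hf (hfG.trans_le (Complex.re_le_norm _))
  have hAφ := Complex.mul_norm_lt_of_forall_re_mul_lt (by positivity : 0 ≤ A / B) fun c hc => by
    simpa only [lp.tsum_mul_smul] using hfV _ (Or.inl ⟨φ, hφ, c, hc, rfl⟩)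
  have hAB : A / B * B < A / B * ‖∑' x, f x * φ x‖ := by gcongr
  rw [div_mul_cancel₀ A hB.ne'] at hAB
  linarith
end

section
/- p-adic Bernstein inequality: Let P(x) = a_d x^d + ... + a₀ be a polynomial of degree d ≥ 1 with coefficients in ℚ_p, let r ∈ p^ℤ, and let Ω = { x ∈ ℚ_p : |P(x)|_p ≤ r }. Then Ω can be covered by O_d(1) balls B such that on each ball B one has sup_{x∈B} |P'(x)|_p ≲_d r / μ(B), where μ is the Haar measure on ℚ_p normalized so that μ(ℤ_p) = 1. -/
/-!
Over the algebraic closure of `ℚ_p` write `P = a ∏ (X - α)`. If every root lies at distance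
at least `δ` from `x`, the Taylor coefficients `c_j` of `P` at `x` satisfy
`‖c_j‖ δ^j ≤ ‖P(x)‖` (induction on the linear factors, using the ultrametric inequality).

For `x` with `‖P(x)‖ ≤ r`, let `p^k` be the largest power with `‖c_j‖ p^{jk} ≤ r` for all
`j ≥ 1`. On the ball of radius `p^k` around `x`, the Taylor expansion of `P'` gives
`‖P'‖ ≤ r / p^k`; by maximality of `k`, some root `α` lies at distance `< p^{k+1}` from `x`.
Among the points attached to the same root, the ball of one with the largest radius contains
all the others, so at most `deg P` balls are needed.
-/

open Filter Topology

namespace Polynomial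

section Ultrametric

variable {L : Type*} [NormedField L] [IsUltrametricDist L]

theorem norm_coeff_X_sub_C_mul_mul_pow_le {S : L[X]} {β : L} {δ : ℝ} (hδ : 0 ≤ δ) (hβ : δ ≤ ‖β‖)
    (hS : ∀ j, ‖S.coeff j‖ * δ ^ j ≤ ‖S.coeff 0‖) (j : ℕ) :
    ‖((X - C β) * S).coeff j‖ * δ ^ j ≤ ‖((X - C β) * S).coeff 0‖ := by
  have hcoeff0 : ‖((X - C β) * S).coeff 0‖ = ‖β‖ * ‖S.coeff 0‖ := by
    simp [sub_mul]
  rw [hcoeff0]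
  cases j with
  | zero => simp [sub_mul]
  | succ i =>
    rw [sub_mul, coeff_sub, coeff_X_mul, coeff_C_mul]
    calc ‖S.coeff i - β * S.coeff (i + 1)‖ * δ ^ (i + 1)
        ≤ max ‖S.coeff i‖ ‖β * S.coeff (i + 1)‖ * δ ^ (i + 1) := by
          rw [sub_eq_add_neg, ← norm_neg (β * _)]
          gcongr
          exact IsUltrametricDist.norm_add_le_max _ _
      _ = max (‖S.coeff i‖ * δ ^ i * δ) (‖β‖ * (‖S.coeff (i + 1)‖ * δ ^ (i + 1))) := by
          rw [max_mul_of_nonneg _ _ (by positivity), norm_mul]; ring_nf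
      _ ≤ ‖β‖ * ‖S.coeff 0‖ := by
          refine max_le ?_ (by gcongr; exact hS _)
          exact (mul_le_mul (hS i) hβ hδ (norm_nonneg _)).trans_eq (mul_comm _ _)

theorem norm_coeff_prod_X_sub_C_mul_pow_le {s : Multiset L} {δ : ℝ} (hδ : 0 ≤ δ)
    (hs : ∀ β ∈ s, δ ≤ ‖β‖) (j : ℕ) :
    ‖(s.map (X - C ·)).prod.coeff j‖ * δ ^ j ≤ ‖(s.map (X - C ·)).prod.coeff 0‖ := by
  induction s using Multiset.induction_on generalizing j with
  | empty => cases j <;> simp [coeff_one]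
  | cons β s ih =>
    rw [Multiset.map_cons, Multiset.prod_cons]
    exact norm_coeff_X_sub_C_mul_mul_pow_le hδ (hs β (Multiset.mem_cons_self _ _))
      (ih fun γ hγ => hs γ (Multiset.mem_cons_of_mem hγ)) j

theorem Splits.norm_taylor_coeff_mul_pow_le {Q : L[X]} (hQ : Q.Splits) {x : L} {δ : ℝ}
    (hδ : 0 ≤ δ) (h : ∀ α ∈ Q.roots, δ ≤ ‖α - x‖) (j : ℕ) :
    ‖(Q.taylor x).coeff j‖ * δ ^ j ≤ ‖Q.eval x‖ := by
  have htaylor : Q.taylor x = C Q.leadingCoeff * ((Q.roots.map (· - x)).map (X - C ·)).prod := by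
    conv_lhs => rw [hQ.eq_prod_roots]
    rw [taylor_apply, mul_comp, C_comp, multiset_prod_comp, Multiset.map_map, Multiset.map_map]
    congr 2
    refine Multiset.map_congr rfl fun α _ => ?_
    simp only [Function.comp_apply, sub_comp, X_comp, C_comp, C_sub]
    ring
  rw [← taylor_coeff_zero, htaylor, coeff_C_mul, coeff_C_mul, norm_mul, norm_mul, mul_assoc]
  gcongr
  refine norm_coeff_prod_X_sub_C_mul_pow_le hδ (fun β hβ => ?_) j
  obtain ⟨α, hα, rfl⟩ := Multiset.mem_map.mp hβ
  exact h α hα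

theorem norm_eval_le_of_forall_norm_coeff_mul_pow_le {f : L[X]} {ρ B : ℝ} (hB : 0 ≤ B)
    (hf : ∀ i, ‖f.coeff i‖ * ρ ^ i ≤ B) {t : L} (ht : ‖t‖ ≤ ρ) : ‖f.eval t‖ ≤ B := by
  rw [eval_eq_sum_range]
  refine IsUltrametricDist.norm_sum_le_of_forall_le_of_nonneg hB fun i _ => ?_
  rw [norm_mul, norm_pow]
  exact le_trans (by gcongr) (hf i)

end Ultrametric

section TaylorBounded

variable {𝕜 : Type*} [NormedField 𝕜]

def TaylorBounded (P : 𝕜[X]) (x : 𝕜) (ρ r : ℝ) : Prop :=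
  ∀ j, 0 < j → ‖(P.taylor x).coeff j‖ * ρ ^ j ≤ r

theorem TaylorBounded.norm_eval_derivative_le [IsUltrametricDist 𝕜] {P : 𝕜[X]} {x : 𝕜}
    {ρ r : ℝ} (h : TaylorBounded P x ρ r) (hρ : 0 < ρ) {y : 𝕜} (hy : ‖y - x‖ ≤ ρ) :
    ‖P.derivative.eval y‖ ≤ r / ρ := by
  have hr : 0 ≤ r := (by positivity : 0 ≤ ‖(P.taylor x).coeff 1‖ * ρ ^ 1).trans (h 1 one_pos)
  have htaylor : P.derivative.taylor x = (P.taylor x).derivative := by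
    rw [taylor_apply, taylor_apply, derivative_comp, derivative_X_add_C, one_mul]
  rw [← sub_add_cancel y x, ← taylor_eval, htaylor]
  refine norm_eval_le_of_forall_norm_coeff_mul_pow_le (by positivity) (fun i => ?_) hy
  rw [coeff_derivative, norm_mul, le_div_iff₀ hρ]
  calc ‖(P.taylor x).coeff (i + 1)‖ * ‖(i : 𝕜) + 1‖ * ρ ^ i * ρ
      ≤ ‖(P.taylor x).coeff (i + 1)‖ * 1 * ρ ^ i * ρ := by
        gcongr
        exact_mod_cast IsUltrametricDist.norm_natCast_le_one 𝕜 (i + 1)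
    _ = ‖(P.taylor x).coeff (i + 1)‖ * ρ ^ (i + 1) := by ring
    _ ≤ r := h (i + 1) i.succ_pos

theorem eventually_taylorBounded (P : 𝕜[X]) (x : 𝕜) {r : ℝ} (hr : 0 < r) :
    ∀ᶠ ρ in 𝓝 0, TaylorBounded P x ρ r := by
  have hterm : ∀ j ∈ (P.taylor x).support,
      ∀ᶠ ρ in 𝓝 (0 : ℝ), 0 < j → ‖(P.taylor x).coeff j‖ * ρ ^ j ≤ r := by
    intro j _
    rcases Nat.eq_zero_or_pos j with rfl | hj
    · exact Eventually.of_forall fun _ h => absurd h (lt_irrefl 0)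
    · have hlim : Tendsto (fun ρ : ℝ => ‖(P.taylor x).coeff j‖ * ρ ^ j) (𝓝 0) (𝓝 0) := by
        simpa [zero_pow hj.ne'] using ((continuous_pow j).tendsto (0 : ℝ)).const_mul _
      filter_upwards [hlim.eventually_lt_const hr] with ρ hρ _ using hρ.le
  filter_upwards [(Filter.eventually_all_finset _).2 hterm] with ρ hρ j hj
  by_cases hs : j ∈ (P.taylor x).support
  · exact hρ j hs hj
  · rw [notMem_support_iff.mp hs, norm_zero, zero_mul]
    exact hr.le

theorem eventually_forall_not_taylorBounded {P : 𝕜[X]} (hP : P.natDegree ≠ 0) (r : ℝ) :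
    ∀ᶠ ρ in atTop, ∀ x, ¬TaylorBounded P x ρ r := by
  have hlc : 0 < ‖P.leadingCoeff‖ :=
    norm_pos_iff.mpr (leadingCoeff_ne_zero.mpr (ne_zero_of_natDegree_gt (Nat.pos_of_ne_zero hP)))
  filter_upwards [((tendsto_pow_atTop hP).const_mul_atTop hlc).eventually_gt_atTop r]
    with ρ hρ x hx
  have htop := hx P.natDegree (Nat.pos_of_ne_zero hP)
  rw [← leadingCoeff_taylor x, leadingCoeff, natDegree_taylor] at hρ
  exact htop.not_gt hρ

theorem exists_root_norm_sub_lt_of_not_taylorBounded {L : Type*} [NormedField L]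
    [NormedAlgebra 𝕜 L] [IsUltrametricDist L] {P : 𝕜[X]}
    (hP : (P.map (algebraMap 𝕜 L)).Splits) {x : 𝕜} {ρ r : ℝ} (hx : ‖P.eval x‖ ≤ r)
    (hρ : 0 ≤ ρ) (h : ¬TaylorBounded P x ρ r) :
    ∃ α ∈ (P.map (algebraMap 𝕜 L)).roots, ‖α - algebraMap 𝕜 L x‖ < ρ := by
  by_contra! hfar
  refine h fun j _ => le_trans ?_ hx
  have := hP.norm_taylor_coeff_mul_pow_le hρ hfar j
  rwa [← map_taylor, coeff_map, eval_map_apply, norm_algebraMap', norm_algebraMap'] at this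

theorem exists_maximal_taylorBounded_zpow {P : 𝕜[X]} (hP : P.natDegree ≠ 0) {r : ℝ}
    (hr : 0 < r) {q : ℝ} (hq : 1 < q) :
    ∃ K : 𝕜 → ℤ, (∀ x, TaylorBounded P x (q ^ K x) r) ∧
      (∀ x, ¬TaylorBounded P x (q ^ (K x + 1)) r) ∧ BddAbove (Set.range K) := by
  obtain ⟨R, hR⟩ := eventually_atTop.mp (eventually_forall_not_taylorBounded hP r)
  obtain ⟨b, -, hbR⟩ := exists_mem_Ioc_zpow (zero_lt_one.trans_le (le_max_right R 1)) hq
  have hbdd : ∀ x k, TaylorBounded P x (q ^ k) r → k ≤ b := by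
    intro x k hk
    by_contra! hbk
    refine hR (q ^ k) ?_ x hk
    calc R ≤ max R 1 := le_max_left R 1
      _ ≤ q ^ (b + 1) := hbR
      _ ≤ q ^ k := zpow_le_zpow_right₀ hq.le hbk
  have hex : ∀ x, ∃ k : ℤ, TaylorBounded P x (q ^ k) r := by
    intro x
    obtain ⟨ε, hε, hball⟩ := Metric.eventually_nhds_iff.mp (eventually_taylorBounded P x hr)
    obtain ⟨k, hk, -⟩ := exists_mem_Ioc_zpow hε hq
    refine ⟨k, hball ?_⟩
    rwa [Real.dist_0_eq_abs, abs_of_pos (zpow_pos (zero_lt_one.trans hq) k)]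
  choose K hK hKmax using fun x => Int.exists_greatest_of_bdd ⟨b, hbdd x⟩ (hex x)
  refine ⟨K, hK, fun x h => ?_, ⟨b, Set.forall_mem_range.mpr fun x => hbdd x _ (hK x)⟩⟩
  exact (K x).lt_succ.not_ge (hKmax x _ h)

end TaylorBounded

section Padic

variable {p : ℕ} [Fact p.Prime]

theorem exists_finset_cover_of_not_taylorBounded (P : ℚ_[p][X]) {r : ℝ} {K : ℚ_[p] → ℤ}
    (hK : ∀ x, ¬TaylorBounded P x ((p : ℝ) ^ (K x + 1)) r) (hKbdd : BddAbove (Set.range K)) :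
    ∃ T : Finset ℚ_[p], T.card ≤ P.natDegree ∧
      {x | ‖P.eval x‖ ≤ r} ⊆ ⋃ c ∈ T, {y | ‖y - c‖ ≤ (p : ℝ) ^ K c} := by
  classical
  set φ := algebraMap ℚ_[p] (PadicAlgCl p)
  set S : PadicAlgCl p → Set ℚ_[p] :=
    fun α => {x | ‖P.eval x‖ ≤ r ∧ ‖α - φ x‖ < (p : ℝ) ^ (K x + 1)}
  have hnear : ∀ x, ‖P.eval x‖ ≤ r → ∃ α ∈ (P.map φ).roots, x ∈ S α := by
    intro x hx
    obtain ⟨α, hα, hlt⟩ := exists_root_norm_sub_lt_of_not_taylorBounded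
      (IsAlgClosed.splits (P.map φ)) hx (by positivity) (hK x)
    exact ⟨α, hα, hx, hlt⟩
  obtain ⟨b, hb⟩ := hKbdd
  have hcenter : ∀ α, ∃ c, (S α).Nonempty → c ∈ S α ∧ ∀ x ∈ S α, K x ≤ K c := by
    intro α
    by_cases hne : (S α).Nonempty
    · obtain ⟨x, hx⟩ := hne
      obtain ⟨k, ⟨c, hc, rfl⟩, hmax⟩ :=
        Int.exists_greatest_of_bdd (P := fun k => ∃ c ∈ S α, K c = k)
          ⟨b, fun _ ⟨c, _, hk⟩ => hk ▸ hb (Set.mem_range_self c)⟩ ⟨K x, x, hx, rfl⟩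
      exact ⟨c, fun _ => ⟨hc, fun x hx => hmax _ ⟨x, hx, rfl⟩⟩⟩
    · exact ⟨0, fun h => absurd h hne⟩
  choose c hc using hcenter
  refine ⟨(P.map φ).roots.toFinset.image c, ?_, fun x hx => ?_⟩
  · calc _ ≤ (P.map φ).roots.toFinset.card := Finset.card_image_le
      _ ≤ Multiset.card (P.map φ).roots := Multiset.toFinset_card_le _
      _ ≤ (P.map φ).natDegree := card_roots' _
      _ = P.natDegree := natDegree_map _
  obtain ⟨α, hα, hxα⟩ := hnear x hx
  obtain ⟨hcα, hcmax⟩ := hc α ⟨x, hxα⟩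
  refine Set.mem_biUnion (Finset.mem_image_of_mem c (Multiset.mem_toFinset.mpr hα)) ?_
  have hdist : ‖x - c α‖ = dist (φ x) (φ (c α)) := by
    rw [dist_eq_norm, ← map_sub, PadicAlgCl.norm_extends]
  show ‖x - c α‖ ≤ _
  rw [Padic.norm_le_pow_iff_norm_lt_pow_add_one, hdist]
  refine (dist_triangle_max _ α _).trans_lt (max_lt ?_ ?_)
  · rw [dist_comm, dist_eq_norm]
    exact hxα.2.trans_le (zpow_le_zpow_right₀ (by exact_mod_cast (Fact.out : p.Prime).one_lt.le)
      (by simpa using hcmax x hxα))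
  · exact (dist_eq_norm _ _).trans_lt hcα.2

end Padic

end Polynomial

/-- p-adic Bernstein inequality: if `P` is a polynomial of degree `d ≥ 1` over `ℚ_p` and
`r = p^n`, then the sublevel set `Ω = {x : |P(x)|_p ≤ r}` can be covered by `O_d(1)` balls
`B = {y : |y − c|_p ≤ p^k}` (whose Haar measure is `p^k`) on each of which
`sup_{x∈B} |P'(x)|_p ≲_d r / μ(B) = r / p^k`. -/
theorem stmt9 (d : ℕ) (hd : 1 ≤ d) :
    ∃ (M : ℕ) (C : ℝ), 0 < C ∧
      ∀ (p : ℕ) [Fact p.Prime], ∀ (P : Polynomial ℚ_[p]), P.natDegree = d →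
      ∀ n : ℤ,
        ∃ (m : ℕ) (c : Fin m → ℚ_[p]) (k : Fin m → ℤ),
          m ≤ M ∧
          {x : ℚ_[p] | ‖Polynomial.eval x P‖ ≤ (p : ℝ) ^ n} ⊆
            ⋃ i : Fin m, {y : ℚ_[p] | ‖y - c i‖ ≤ (p : ℝ) ^ (k i)} ∧
          ∀ i : Fin m, ∀ y : ℚ_[p], ‖y - c i‖ ≤ (p : ℝ) ^ (k i) →
            ‖Polynomial.eval y P.derivative‖ ≤ C * (p : ℝ) ^ n / (p : ℝ) ^ (k i) := by
  refine ⟨d, 1, one_pos, fun p _ P hP n => ?_⟩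
  have hp : (1 : ℝ) < p := by exact_mod_cast (Fact.out : p.Prime).one_lt
  have hr : (0 : ℝ) < p ^ n := by positivity
  obtain ⟨K, hK, hKmax, hKbdd⟩ :=
    Polynomial.exists_maximal_taylorBounded_zpow (hP ▸ (by omega : d ≠ 0)) hr hp
  obtain ⟨T, hTcard, hcover⟩ := Polynomial.exists_finset_cover_of_not_taylorBounded P hKmax hKbdd
  refine ⟨T.card, fun i => T.equivFin.symm i, fun i => K (T.equivFin.symm i), hP ▸ hTcard,
    fun x hx => ?_, fun i y hy => ?_⟩
  · obtain ⟨c, hc, hxc⟩ := Set.mem_iUnion₂.mp (hcover hx)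
    exact Set.mem_iUnion.mpr ⟨T.equivFin ⟨c, hc⟩, by simpa using hxc⟩
  · rw [one_mul]
    exact (hK _).norm_eval_derivative_le (by positivity) hy
end

section
/- p-adic van der Corput estimate: Let P(x) = a_d x^d + ... + a₀ be a polynomial of degree d ≥ 1 with coefficients in ℚ_p and a_d ≠ 0, and let r ∈ p^ℤ. Then the sublevel set Ω = { x ∈ ℚ_p : |P(x)|_p ≤ r } has Haar measure μ(Ω) ≲_d (r/|a_d|_p)^{1/d}; indeed, Ω is covered by O_d(1) balls of radius (r/|a_d|_p)^{1/d}. -/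
/-!
Put `R = (r / |a_d|)^{1/d}`. If `x₀, …, x_d ∈ Ω` were pairwise more than `R` apart, the Lagrange
formula `a_d = ∑ P(xᵢ) / ∏_{j ≠ i} (xᵢ - xⱼ)` and the ultrametric inequality would give
`|a_d| < r / R^d = |a_d|`. So the packing number of `Ω` at scale `R` is at most `d`, and a maximal
`R`-separated subset of `Ω` is a cover by at most `d` closed balls of radius `R`. Since p-adic
distances are powers of `p`, such a ball is a ball of radius `p^k ≤ R`, so has measure at most `R`.
-/

open scoped ENNReal NNReal
open Polynomial Metric MeasureTheory

theorem Finset.pow_card_lt_prod {ι R : Type*} [CommSemiring R] [PartialOrder R]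
    [IsStrictOrderedRing R] {s : Finset ι} (hs : s.Nonempty) {a : R} (ha : 0 ≤ a) {f : ι → R}
    (h : ∀ i ∈ s, a < f i) : a ^ s.card < ∏ i ∈ s, f i := by
  rcases ha.eq_or_lt with rfl | ha
  · rw [zero_pow (Finset.card_pos.mpr hs).ne']
    exact Finset.prod_pos h
  · rw [← Finset.prod_const]
    exact Finset.prod_lt_prod_of_nonempty (fun _ _ => ha) h hs

theorem Metric.exists_fin_cover_of_packingNumber_le {X : Type*} [PseudoMetricSpace X]
    {ε : ℝ≥0} {A : Set X} {N : ℕ} (h : packingNumber ε A ≤ N) :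
    ∃ (m : ℕ) (c : Fin m → X), m ≤ N ∧ A ⊆ ⋃ i, closedBall (c i) ε := by
  have htop : packingNumber ε A ≠ ⊤ := ne_top_of_le_ne_top (ENat.natCast_ne_top N) h
  have hC : (maximalSeparatedSet ε A).encard ≤ N := (encard_maximalSeparatedSet htop).trans_le h
  obtain ⟨m, c, hc⟩ := (Set.finite_of_encard_le_coe hC).fin_embedding
  refine ⟨m, c, ?_, ?_⟩
  · have := c.injective.encard_range
    rw [hc, ENat.card_eq_coe_fintype_card, Fintype.card_fin] at this
    exact_mod_cast this.trans hC
  · have := (isCover_maximalSeparatedSet htop).subset_iUnion_closedBall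
    rwa [← hc, Set.biUnion_range] at this

namespace Polynomial

variable {K : Type*} [NormedField K] [IsUltrametricDist K]

theorem exists_norm_leadingCoeff_mul_prod_le [DecidableEq K] {P : K[X]} (hP : P ≠ 0)
    {s : Finset K} (hs : s.card = P.natDegree + 1) :
    ∃ i ∈ s, ‖P.leadingCoeff‖ * ∏ j ∈ s.erase i, ‖i - j‖ ≤ ‖P.eval i‖ := by
  have hlc := Lagrange.leadingCoeff_eq_sum (v := id) Function.injective_id.injOn
    (P := P) (by rw [hs, degree_eq_natDegree hP]; norm_cast)
  obtain ⟨i, hi, hle⟩ := IsUltrametricDist.exists_norm_finsetSum_le_of_nonempty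
    (Finset.card_pos.mp (by omega : 0 < s.card)) fun i => P.eval i / ∏ j ∈ s.erase i, (i - j)
  refine ⟨i, hi, ?_⟩
  have hprod : 0 < ∏ j ∈ s.erase i, ‖i - j‖ := Finset.prod_pos fun j hj =>
    norm_pos_iff.2 (sub_ne_zero.2 (Finset.ne_of_mem_erase hj).symm)
  simp only [id] at hlc
  rwa [← hlc, norm_div, norm_prod, le_div_iff₀ hprod] at hle

theorem packingNumber_sublevel_le_natDegree {P : K[X]} (hP : 0 < P.natDegree) {r : ℝ}
    {ε : ℝ≥0} (hr : r ≤ ‖P.leadingCoeff‖ * ε ^ P.natDegree) :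
    packingNumber ε {x | ‖P.eval x‖ ≤ r} ≤ P.natDegree := by
  classical
  refine iSup₂_le fun C hC => iSup_le fun hsep => ?_
  by_contra! hlt
  obtain ⟨t, htC, htcard⟩ := Set.exists_subset_encard_eq (Order.add_one_le_of_lt hlt)
  have htfin : t.Finite := Set.finite_of_encard_eq_coe htcard
  have hs : htfin.toFinset.card = P.natDegree + 1 := by
    exact_mod_cast htfin.encard_eq_coe_toFinset_card.symm.trans htcard
  obtain ⟨i, hi, hle⟩ := exists_norm_leadingCoeff_mul_prod_le (ne_zero_of_natDegree_gt hP) hs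
  have hdist : ∀ j ∈ htfin.toFinset.erase i, (ε : ℝ) < ‖i - j‖ := fun j hj => by
    have hij := (Finset.ne_of_mem_erase hj).symm
    simp only [Set.Finite.mem_toFinset, Finset.mem_erase] at hi hj
    have : (ε : ℝ≥0∞) < edist i j := hsep (htC hi) (htC hj.2) hij
    rwa [edist_dist, ENNReal.coe_lt_ofReal, dist_eq_norm] at this
  have hprod : (ε : ℝ) ^ P.natDegree < ∏ j ∈ htfin.toFinset.erase i, ‖i - j‖ := by
    have hcard : (htfin.toFinset.erase i).card = P.natDegree := by
      rw [Finset.card_erase_of_mem hi, hs, Nat.add_sub_cancel]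
    rw [← hcard]
    exact Finset.pow_card_lt_prod (Finset.card_pos.mp (hcard ▸ hP)) ε.coe_nonneg hdist
  have hlc : 0 < ‖P.leadingCoeff‖ :=
    norm_pos_iff.2 (leadingCoeff_ne_zero.2 (ne_zero_of_natDegree_gt hP))
  have hri : ‖P.eval i‖ ≤ r := hC (htC (by simpa using hi))
  nlinarith [mul_lt_mul_of_pos_left hprod hlc]

theorem exists_fin_cover_sublevel {P : K[X]} (hP : 0 < P.natDegree) {r R : ℝ} (hR : 0 ≤ R)
    (hr : r ≤ ‖P.leadingCoeff‖ * R ^ P.natDegree) :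
    ∃ (m : ℕ) (c : Fin m → K), m ≤ P.natDegree ∧
      {x | ‖P.eval x‖ ≤ r} ⊆ ⋃ i, closedBall (c i) R := by
  lift R to ℝ≥0 using hR
  exact exists_fin_cover_of_packingNumber_le (packingNumber_sublevel_le_natDegree hP hr)

end Polynomial

namespace Padic

variable {p : ℕ} [Fact p.Prime]

theorem exists_zpow_le_and_closedBall_subset (c : ℚ_[p]) {R : ℝ} (hR : 0 < R) :
    ∃ k : ℤ, (p : ℝ) ^ k ≤ R ∧ closedBall c R ⊆ closedBall c ((p : ℝ) ^ k) := by
  have hp : (1 : ℝ) < p := by exact_mod_cast (Fact.out : p.Prime).one_lt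
  obtain ⟨k, hk, hRk⟩ := exists_mem_Ico_zpow hR hp
  refine ⟨k, hk, fun y hy => ?_⟩
  rw [mem_closedBall_iff_norm] at hy ⊢
  rcases eq_or_ne y c with rfl | hyc
  · rw [sub_self, norm_zero]
    positivity
  · rw [norm_eq_zpow_neg_valuation (sub_ne_zero.2 hyc)] at hy ⊢
    have := (zpow_lt_zpow_iff_right₀ hp).1 (hy.trans_lt hRk)
    exact zpow_le_zpow_right₀ hp.le (Int.lt_add_one_iff.1 this)

theorem measure_closedBall_le [MeasurableSpace ℚ_[p]] {μ : Measure ℚ_[p]}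
    (hμ : ∀ (x : ℚ_[p]) (n : ℤ), μ (closedBall x ((p : ℝ) ^ n)) = ENNReal.ofReal ((p : ℝ) ^ n))
    (c : ℚ_[p]) {R : ℝ} (hR : 0 < R) : μ (closedBall c R) ≤ ENNReal.ofReal R := by
  obtain ⟨k, hk, hsub⟩ := exists_zpow_le_and_closedBall_subset c hR
  calc μ (closedBall c R) ≤ μ (closedBall c ((p : ℝ) ^ k)) := measure_mono hsub
    _ ≤ ENNReal.ofReal R := (hμ c k).trans_le (ENNReal.ofReal_le_ofReal hk)

end Padic

/-- p-adic van der Corput estimate: if `P` is a polynomial of degree `d ≥ 1` over `ℚ_p`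
with nonzero leading coefficient `a_d`, `μ` is the Haar measure on `ℚ_p` normalized so
that every ball of radius `p^n` has measure `p^n` (so `μ(ℤ_p) = 1`), and `r = p^n`, then
the sublevel set `Ω = {x : |P(x)|_p ≤ r}` satisfies `μ(Ω) ≲_d (r/|a_d|_p)^{1/d}`; indeed
`Ω` is covered by `O_d(1)` balls of radius `(r/|a_d|_p)^{1/d}`. -/
theorem stmt10 (d : ℕ) (hd : 1 ≤ d) :
    ∃ (M : ℕ) (C : ℝ), 0 < C ∧
      ∀ (p : ℕ) [Fact p.Prime], ∀ [MeasurableSpace ℚ_[p]], ∀ (μ : MeasureTheory.Measure ℚ_[p]),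
        (∀ (x : ℚ_[p]) (n : ℤ),
          μ {y : ℚ_[p] | ‖y - x‖ ≤ (p : ℝ) ^ n} = ENNReal.ofReal ((p : ℝ) ^ n)) →
      ∀ (P : Polynomial ℚ_[p]), P.natDegree = d → P ≠ 0 →
      ∀ n : ℤ,
        μ {x : ℚ_[p] | ‖Polynomial.eval x P‖ ≤ (p : ℝ) ^ n} ≤
          ENNReal.ofReal (C * ((p : ℝ) ^ n / ‖P.leadingCoeff‖) ^ ((1 : ℝ) / d)) ∧
        ∃ (m : ℕ) (c : Fin m → ℚ_[p]),
          m ≤ M ∧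
          {x : ℚ_[p] | ‖Polynomial.eval x P‖ ≤ (p : ℝ) ^ n} ⊆
            ⋃ i : Fin m,
              {y : ℚ_[p] | ‖y - c i‖ ≤ ((p : ℝ) ^ n / ‖P.leadingCoeff‖) ^ ((1 : ℝ) / d)} := by
  refine ⟨d, d, by exact_mod_cast hd, fun p _ _ μ hμ P hPd hP0 n => ?_⟩
  have hball : ∀ (x : ℚ_[p]) (r : ℝ), {y | ‖y - x‖ ≤ r} = closedBall x r := fun x r =>
    Set.ext fun _ => mem_closedBall_iff_norm.symm
  simp only [hball] at hμ ⊢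
  set R := ((p : ℝ) ^ n / ‖P.leadingCoeff‖) ^ ((1 : ℝ) / d)
  have hlc : 0 < ‖P.leadingCoeff‖ := norm_pos_iff.2 (leadingCoeff_ne_zero.2 hP0)
  have hbase : 0 < (p : ℝ) ^ n / ‖P.leadingCoeff‖ := by
    have : (0 : ℝ) < p := by exact_mod_cast (Fact.out : p.Prime).pos
    positivity
  have hR : 0 < R := Real.rpow_pos_of_pos hbase _
  have hRd : (p : ℝ) ^ n ≤ ‖P.leadingCoeff‖ * R ^ P.natDegree := by
    simp only [R, one_div]
    rw [hPd, Real.rpow_inv_natCast_pow hbase.le (by omega), mul_div_cancel₀ _ hlc.ne']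
  obtain ⟨m, c, hm, hcover⟩ := P.exists_fin_cover_sublevel (by omega) hR.le hRd
  refine ⟨?_, m, c, hPd ▸ hm, hcover⟩
  calc μ {x | ‖P.eval x‖ ≤ (p : ℝ) ^ n} ≤ ∑ i, μ (closedBall (c i) R) :=
        (measure_mono hcover).trans (measure_iUnion_fintype_le μ _)
    _ ≤ ∑ _i : Fin m, ENNReal.ofReal R :=
        Finset.sum_le_sum fun i _ => Padic.measure_closedBall_le hμ (c i) hR
    _ = ENNReal.ofReal (m * R) := by
        rw [Finset.sum_const, Finset.card_univ, Fintype.card_fin, nsmul_eq_mul,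
          ENNReal.ofReal_mul (Nat.cast_nonneg m), ENNReal.ofReal_natCast]
    _ ≤ ENNReal.ofReal (d * R) := by
        gcongr
        exact_mod_cast hPd ▸ hm
end

section
/- Crude bilinear multiplier bound on ℤ: Let m : 𝕋² → ℂ be smooth, 0 < r₁, r₂ ≤ 1, and 1 ≤ p, p₁, p₂ ≤ ∞ with 1/p₁ + 1/p₂ = 1/p. Then the bilinear Fourier multiplier operator B_m(f,g)(x) := ∫_{𝕋²} m(ξ₁,ξ₂) 𝓕f(ξ₁) 𝓕g(ξ₂) e^{−2πix(ξ₁+ξ₂)} dξ₁dξ₂ satisfies ‖B_m‖_{ℓ^{p₁}(ℤ)×ℓ^{p₂}(ℤ)→ℓ^p(ℤ)} ≲ sup_{0≤j₁,j₂≤2} ∫_{𝕋²} r₁^{j₁−1} r₂^{j₂−1} |∂^{j₁}_{ξ₁}∂^{j₂}_{ξ₂} m(ξ₁,ξ₂)| dξ₁dξ₂, with an absolute implied constant. -/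
open MeasureTheory intervalIntegral
open scoped ENNReal Real ContDiff

noncomputable def ee (a : ℤ) (ξ : ℝ) : ℂ := Complex.exp (2 * π * Complex.I * a * ξ)

lemma ee_hasDerivAt (a : ℤ) (ξ : ℝ) :
    HasDerivAt (ee a) (2 * π * Complex.I * a * ee a ξ) ξ := by
  have h1 : HasDerivAt (fun ξ : ℝ => ((ξ : ℂ))) 1 ξ := by
    simpa using (hasDerivAt_id ξ).ofReal_comp
  have h2 := (h1.const_mul (2 * π * Complex.I * (a:ℂ))).cexp
  simp only [mul_one] at h2
  unfold ee
  refine h2.congr_deriv ?_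
  ring

lemma ee_continuous (a : ℤ) : Continuous (ee a) := by
  unfold ee; fun_prop

lemma ee_norm (a : ℤ) (ξ : ℝ) : ‖ee a ξ‖ = 1 := by
  rw [ee, show (2 : ℂ) * π * Complex.I * a * ξ = ((2 * π * a * ξ : ℝ) : ℂ) * Complex.I by
    push_cast; ring]
  exact Complex.norm_exp_ofReal_mul_I _

lemma ee_one (a : ℤ) : ee a 1 = 1 := by
  simp only [ee, Complex.ofReal_one, mul_one]
  rw [show (2 : ℂ) * π * Complex.I * a = a * (2 * π * Complex.I) by ring]
  exact Complex.exp_int_mul_two_pi_mul_I a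

lemma ee_zero_arg (a : ℤ) : ee a 0 = 1 := by simp [ee]

lemma ibp_step {h h' : ℝ → ℂ} (hder : ∀ ξ, HasDerivAt h (h' ξ) ξ) (hcont : Continuous h')
    (hper : h 1 = h 0) {a : ℤ} (ha : a ≠ 0) :
    ∫ ξ in (0:ℝ)..1, h ξ * ee a ξ
      = (-(2 * π * Complex.I * a))⁻¹ * ∫ ξ in (0:ℝ)..1, h' ξ * ee a ξ := by
  set c : ℂ := 2 * π * Complex.I * a with hc
  have hc0 : c ≠ 0 := by
    simp [hc, Complex.I_ne_zero, Real.pi_ne_zero, ha]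
  have hv : ∀ ξ ∈ Set.uIcc (0:ℝ) 1, HasDerivAt (fun ξ => c⁻¹ * ee a ξ) (ee a ξ) ξ := by
    intro ξ _
    have := HasDerivAt.const_mul c⁻¹ (ee_hasDerivAt a ξ)
    refine this.congr_deriv ?_
    rw [← hc, ← mul_assoc, inv_mul_cancel₀ hc0, one_mul]
  have hu : ∀ ξ ∈ Set.uIcc (0:ℝ) 1, HasDerivAt h (h' ξ) ξ := fun ξ _ => hder ξ
  have key := intervalIntegral.integral_mul_deriv_eq_deriv_mul hu hv
    (hcont.intervalIntegrable _ _) ((ee_continuous a).intervalIntegrable _ _)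
  have hbound : h 1 * (c⁻¹ * ee a 1) - h 0 * (c⁻¹ * ee a 0) = 0 := by
    rw [ee_one, ee_zero_arg, hper]; ring
  rw [key, hbound, zero_sub,
    show (∫ x in (0:ℝ)..1, h' x * (c⁻¹ * ee a x)) = c⁻¹ * ∫ x in (0:ℝ)..1, h' x * ee a x from by
      rw [← intervalIntegral.integral_const_mul]; congr 1; ext x; ring,
    ← neg_mul, neg_inv]

lemma norm_intg_ee_le0 {h : ℝ → ℂ} (a : ℤ) :
    ‖∫ ξ in (0:ℝ)..1, h ξ * ee a ξ‖ ≤ ∫ ξ in (0:ℝ)..1, ‖h ξ‖ := by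
  refine le_trans (intervalIntegral.norm_integral_le_integral_norm zero_le_one) (le_of_eq ?_)
  apply intervalIntegral.integral_congr
  intro ξ _
  have := ee_norm a ξ
  simp [this]

lemma periodic_deriv' {h : ℝ → ℂ} (hper : ∀ ξ, h (ξ + 1) = h ξ) (ξ : ℝ) :
    deriv h (ξ + 1) = deriv h ξ := by
  have h1 : (fun x => h (x + 1)) = h := funext hper
  rw [← deriv_comp_add_const (f := h) (a := 1) (x := ξ), h1]

lemma norm_c (a : ℤ) : ‖(-(2 * (π:ℂ) * Complex.I * a))⁻¹‖ = (2 * π * |(a:ℝ)|)⁻¹ := by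
  rw [norm_inv, norm_neg]
  congr 1
  simp only [norm_mul, Complex.norm_two, Complex.norm_I, Complex.norm_real, Real.norm_eq_abs,
    Complex.norm_intCast]
  rw [abs_of_pos Real.pi_pos]
  ring

lemma norm_intg_ee_le2 {h : ℝ → ℂ} (hh : ContDiff ℝ ∞ h) (hper : ∀ ξ, h (ξ + 1) = h ξ)
    {a : ℤ} (ha : a ≠ 0) :
    ‖∫ ξ in (0:ℝ)..1, h ξ * ee a ξ‖ ≤
      ((2 * π * |(a:ℝ)|)⁻¹) ^ 2 * ∫ ξ in (0:ℝ)..1, ‖iteratedDeriv 2 h ξ‖ := by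
  obtain ⟨hdiff, hh'⟩ := contDiff_infty_iff_deriv.mp hh
  obtain ⟨hdiff', hh''⟩ := contDiff_infty_iff_deriv.mp hh'
  have hder : ∀ ξ, HasDerivAt h (deriv h ξ) ξ := fun ξ => (hdiff ξ).hasDerivAt
  have hder' : ∀ ξ, HasDerivAt (deriv h) (deriv (deriv h) ξ) ξ := fun ξ => (hdiff' ξ).hasDerivAt
  have e1 := ibp_step hder hh'.continuous (by simpa using hper 0) ha
  have e2 := ibp_step hder' hh''.continuous (by simpa using periodic_deriv' hper 0) ha
  have hid2 : iteratedDeriv 2 h = deriv (deriv h) := by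
    rw [show (2:ℕ) = 1 + 1 from rfl, iteratedDeriv_succ, iteratedDeriv_one]
  rw [e1, e2, ← mul_assoc, norm_mul, norm_mul, norm_c, hid2, sq]
  have hb := norm_intg_ee_le0 (h := deriv (deriv h)) a
  calc (2 * π * |(a:ℝ)|)⁻¹ * (2 * π * |(a:ℝ)|)⁻¹ * ‖∫ ξ in (0:ℝ)..1, deriv (deriv h) ξ * ee a ξ‖
      ≤ (2 * π * |(a:ℝ)|)⁻¹ * (2 * π * |(a:ℝ)|)⁻¹ * ∫ ξ in (0:ℝ)..1, ‖deriv (deriv h) ξ‖ := by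
        apply mul_le_mul_of_nonneg_left hb
        positivity

variable {m : ℝ → ℝ → ℂ}

lemma partial2_smooth (hm : ContDiff ℝ ∞ (fun ξ : ℝ × ℝ => m ξ.1 ξ.2)) (j : ℕ) :
    ContDiff ℝ ∞ (fun ξ : ℝ × ℝ => iteratedDeriv j (m ξ.1) ξ.2) := by
  induction j with
  | zero => simpa using hm
  | succ j ih =>
    set F : ℝ × ℝ → ℂ := fun ξ : ℝ × ℝ => iteratedDeriv j (m ξ.1) ξ.2 with hF
    have key : ∀ ξ₁ ξ₂ : ℝ, iteratedDeriv (j+1) (m ξ₁) ξ₂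
        = fderiv ℝ F (ξ₁, ξ₂) ((0:ℝ), (1:ℝ)) := by
      intro ξ₁ ξ₂
      rw [iteratedDeriv_succ]
      have hγ : HasDerivAt (fun b : ℝ => ((ξ₁, b) : ℝ × ℝ)) ((0:ℝ), (1:ℝ)) ξ₂ :=
        (hasDerivAt_const ξ₂ ξ₁).prodMk (hasDerivAt_id ξ₂)
      have hFd : HasFDerivAt F (fderiv ℝ F (ξ₁, ξ₂)) (ξ₁, ξ₂) :=
        (ih.differentiable (by simp) (ξ₁, ξ₂)).hasFDerivAt
      have : HasDerivAt (fun b : ℝ => F (ξ₁, b)) (fderiv ℝ F (ξ₁, ξ₂) ((0:ℝ), (1:ℝ))) ξ₂ :=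
        hFd.comp_hasDerivAt ξ₂ hγ
      exact this.deriv
    have hsm : ContDiff ℝ ∞ (fun ξ : ℝ × ℝ => fderiv ℝ F ξ ((0:ℝ), (1:ℝ))) := by
      have h1 : ContDiff ℝ ∞ (fderiv ℝ F) := ih.fderiv_right (le_refl _)
      exact h1.clm_apply contDiff_const
    have : (fun ξ : ℝ × ℝ => iteratedDeriv (j+1) (m ξ.1) ξ.2)
        = fun ξ : ℝ × ℝ => fderiv ℝ F (ξ.1, ξ.2) ((0:ℝ), (1:ℝ)) := by
      ext ξ; exact key ξ.1 ξ.2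
    rw [this]
    simpa using hsm

lemma partial2_per1 (hper : ∀ ξ₁ ξ₂ : ℝ, m (ξ₁ + 1) ξ₂ = m ξ₁ ξ₂) (j : ℕ) (ξ₁ ξ₂ : ℝ) :
    iteratedDeriv j (m (ξ₁ + 1)) ξ₂ = iteratedDeriv j (m ξ₁) ξ₂ := by
  have : m (ξ₁ + 1) = m ξ₁ := funext (hper ξ₁)
  rw [this]

lemma partial2_per2 (hper : ∀ ξ₁ ξ₂ : ℝ, m ξ₁ (ξ₂ + 1) = m ξ₁ ξ₂) (j : ℕ) (ξ₁ ξ₂ : ℝ) :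
    iteratedDeriv j (m ξ₁) (ξ₂ + 1) = iteratedDeriv j (m ξ₁) ξ₂ := by
  have h1 : (fun x => m ξ₁ (x + 1)) = m ξ₁ := funext (hper ξ₁)
  calc iteratedDeriv j (m ξ₁) (ξ₂ + 1)
      = iteratedDeriv j (fun x => m ξ₁ (x + 1)) ξ₂ := by
        rw [iteratedDeriv_comp_add_const]
    _ = iteratedDeriv j (m ξ₁) ξ₂ := by rw [h1]

noncomputable def Kker (m : ℝ → ℝ → ℂ) (a b : ℤ) : ℂ :=
  ∫ ξ₁ in (0:ℝ)..1, ∫ ξ₂ in (0:ℝ)..1, m ξ₁ ξ₂ * ee a ξ₁ * ee b ξ₂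

lemma swap01 {E : Type*} [NormedAddCommGroup E] [NormedSpace ℝ E] {F : ℝ → ℝ → E}
    (hF : Continuous (Function.uncurry F)) :
    ∫ x in (0:ℝ)..1, ∫ y in (0:ℝ)..1, F x y = ∫ y in (0:ℝ)..1, ∫ x in (0:ℝ)..1, F x y := by
  have hI : Integrable (Function.uncurry F)
      ((volume.restrict (Set.Ioc (0:ℝ) 1)).prod (volume.restrict (Set.Ioc (0:ℝ) 1))) := by
    rw [Measure.prod_restrict]
    have h2 : IntegrableOn (Function.uncurry F) (Set.Icc (0:ℝ) 1 ×ˢ Set.Icc (0:ℝ) 1)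
        (volume.prod volume) := by
      rw [← Measure.volume_eq_prod]
      exact hF.continuousOn.integrableOn_compact (isCompact_Icc.prod isCompact_Icc)
    exact h2.mono_set (Set.prod_mono Set.Ioc_subset_Icc_self Set.Ioc_subset_Icc_self)
  simp_rw [intervalIntegral.integral_of_le (zero_le_one (α := ℝ))]
  exact MeasureTheory.integral_integral_swap hI

lemma partial1_smooth {F : ℝ → ℝ → ℂ} (hF : ContDiff ℝ ∞ (fun ξ : ℝ × ℝ => F ξ.1 ξ.2)) (j : ℕ) :
    ContDiff ℝ ∞ (fun ξ : ℝ × ℝ => iteratedDeriv j (fun t => F t ξ.2) ξ.1) := by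
  have hswap : ContDiff ℝ ∞ (fun ξ : ℝ × ℝ => (ξ.2, ξ.1)) := contDiff_snd.prodMk contDiff_fst
  have hG : ContDiff ℝ ∞ (fun ξ : ℝ × ℝ => F ξ.2 ξ.1) := hF.comp hswap
  have := (partial2_smooth (m := fun x y => F y x) hG j).comp hswap
  exact this

noncomputable def cfac (j : ℕ) (b : ℤ) : ℂ := ((-(2 * π * Complex.I * b))⁻¹) ^ j

lemma ibp_j {h : ℝ → ℂ} (hh : ContDiff ℝ ∞ h) (hper : ∀ ξ, h (ξ + 1) = h ξ)
    {b : ℤ} {j : ℕ} (hj : j = 0 ∨ (j = 2 ∧ b ≠ 0)) :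
    ∫ ξ in (0:ℝ)..1, h ξ * ee b ξ
      = cfac j b * ∫ ξ in (0:ℝ)..1, iteratedDeriv j h ξ * ee b ξ := by
  rcases hj with hj | ⟨hj, hb⟩
  · subst hj; simp [cfac, iteratedDeriv_zero]
  · subst hj
    obtain ⟨hdiff, hh'⟩ := contDiff_infty_iff_deriv.mp hh
    obtain ⟨hdiff', hh''⟩ := contDiff_infty_iff_deriv.mp hh'
    have hder : ∀ ξ, HasDerivAt h (deriv h ξ) ξ := fun ξ => (hdiff ξ).hasDerivAt
    have hder' : ∀ ξ, HasDerivAt (deriv h) (deriv (deriv h) ξ) ξ := fun ξ => (hdiff' ξ).hasDerivAt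
    have e1 := ibp_step hder hh'.continuous (by simpa using hper 0) hb
    have e2 := ibp_step hder' hh''.continuous (by simpa using periodic_deriv' hper 0) hb
    have hid2 : iteratedDeriv 2 h = deriv (deriv h) := by
      rw [show (2:ℕ) = 1 + 1 from rfl, iteratedDeriv_succ, iteratedDeriv_one]
    rw [e1, e2, ← mul_assoc, hid2, cfac, sq]

lemma kernel_bound {m : ℝ → ℝ → ℂ} (hm : ContDiff ℝ ∞ (fun ξ : ℝ × ℝ => m ξ.1 ξ.2))
    (hper1 : ∀ ξ₁ ξ₂ : ℝ, m (ξ₁ + 1) ξ₂ = m ξ₁ ξ₂)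
    (hper2 : ∀ ξ₁ ξ₂ : ℝ, m ξ₁ (ξ₂ + 1) = m ξ₁ ξ₂)
    (a b : ℤ) (j₁ j₂ : ℕ) (hj₁ : j₁ = 0 ∨ (j₁ = 2 ∧ a ≠ 0)) (hj₂ : j₂ = 0 ∨ (j₂ = 2 ∧ b ≠ 0)) :
    ‖Kker m a b‖ ≤ ((2 * π * |(a:ℝ)|)⁻¹) ^ j₁ * ((2 * π * |(b:ℝ)|)⁻¹) ^ j₂ *
      ∫ ξ₁ in (0:ℝ)..1, ∫ ξ₂ in (0:ℝ)..1,
        ‖iteratedDeriv j₁ (fun t : ℝ => iteratedDeriv j₂ (m t) ξ₂) ξ₁‖ := by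
  -- notation
  set m₂ : ℝ → ℝ → ℂ := fun ξ₁ ξ₂ => iteratedDeriv j₂ (m ξ₁) ξ₂ with hm₂def
  set m₁₂ : ℝ → ℝ → ℂ := fun ξ₁ ξ₂ => iteratedDeriv j₁ (fun t : ℝ => m₂ t ξ₂) ξ₁ with hm₁₂def
  have hm₂smooth : ContDiff ℝ ∞ (fun ξ : ℝ × ℝ => m₂ ξ.1 ξ.2) := partial2_smooth hm j₂
  have hm₁₂smooth : ContDiff ℝ ∞ (fun ξ : ℝ × ℝ => m₁₂ ξ.1 ξ.2) := partial1_smooth hm₂smooth j₁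
  have hfix1 : ∀ ξ₁ : ℝ, ContDiff ℝ ∞ (m ξ₁) :=
    fun ξ₁ => hm.comp (contDiff_const.prodMk contDiff_id)
  have hfix2 : ∀ ξ₂ : ℝ, ContDiff ℝ ∞ (fun t => m₂ t ξ₂) :=
    fun ξ₂ => hm₂smooth.comp (contDiff_id.prodMk contDiff_const)
  -- step 1 : inner IBP in ξ₂
  have step1 : ∀ ξ₁ : ℝ, (∫ ξ₂ in (0:ℝ)..1, m ξ₁ ξ₂ * ee a ξ₁ * ee b ξ₂)
      = ee a ξ₁ * (cfac j₂ b * ∫ ξ₂ in (0:ℝ)..1, m₂ ξ₁ ξ₂ * ee b ξ₂) := by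
    intro ξ₁
    rw [show (fun ξ₂ => m ξ₁ ξ₂ * ee a ξ₁ * ee b ξ₂)
        = (fun ξ₂ => ee a ξ₁ * (m ξ₁ ξ₂ * ee b ξ₂)) from by ext ξ₂; ring]
    rw [intervalIntegral.integral_const_mul]
    congr 1
    exact ibp_j (hfix1 ξ₁) (fun ξ => hper2 ξ₁ ξ) hj₂
  have step1' : Kker m a b
      = cfac j₂ b * ∫ ξ₁ in (0:ℝ)..1, ∫ ξ₂ in (0:ℝ)..1, m₂ ξ₁ ξ₂ * ee b ξ₂ * ee a ξ₁ := by
    rw [Kker]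
    rw [intervalIntegral.integral_congr (g :=
      fun ξ₁ => cfac j₂ b * ((∫ ξ₂ in (0:ℝ)..1, m₂ ξ₁ ξ₂ * ee b ξ₂) * ee a ξ₁))
      (fun ξ₁ _ => by rw [step1 ξ₁]; ring)]
    rw [intervalIntegral.integral_const_mul]
    congr 1
    exact intervalIntegral.integral_congr
      (fun ξ₁ _ => (intervalIntegral.integral_mul_const _ _).symm)
  -- step 2 : Fubini
  have hcontmix : Continuous (Function.uncurry (fun ξ₁ ξ₂ => m₂ ξ₁ ξ₂ * ee b ξ₂ * ee a ξ₁)) := by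
    apply Continuous.mul
    apply Continuous.mul
    · exact hm₂smooth.continuous
    · exact (ee_continuous b).comp continuous_snd
    · exact (ee_continuous a).comp continuous_fst
  have step2 : (∫ ξ₁ in (0:ℝ)..1, ∫ ξ₂ in (0:ℝ)..1, m₂ ξ₁ ξ₂ * ee b ξ₂ * ee a ξ₁)
      = ∫ ξ₂ in (0:ℝ)..1, ∫ ξ₁ in (0:ℝ)..1, m₂ ξ₁ ξ₂ * ee b ξ₂ * ee a ξ₁ :=
    swap01 hcontmix
  -- step 3 : inner IBP in ξ₁
  have step3 : ∀ ξ₂ : ℝ, (∫ ξ₁ in (0:ℝ)..1, m₂ ξ₁ ξ₂ * ee b ξ₂ * ee a ξ₁)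
      = (cfac j₁ a * ∫ ξ₁ in (0:ℝ)..1, m₁₂ ξ₁ ξ₂ * ee a ξ₁) * ee b ξ₂ := by
    intro ξ₂
    rw [show (fun ξ₁ => m₂ ξ₁ ξ₂ * ee b ξ₂ * ee a ξ₁)
        = (fun ξ₁ => (m₂ ξ₁ ξ₂ * ee a ξ₁) * ee b ξ₂) from by ext ξ₁; ring]
    rw [intervalIntegral.integral_mul_const]
    congr 1
    exact ibp_j (hfix2 ξ₂) (fun ξ => partial2_per1 hper1 j₂ ξ ξ₂) hj₁
  have keyeq : Kker m a b = cfac j₂ b * (cfac j₁ a *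
      ∫ ξ₂ in (0:ℝ)..1, (∫ ξ₁ in (0:ℝ)..1, m₁₂ ξ₁ ξ₂ * ee a ξ₁) * ee b ξ₂) := by
    rw [step1', step2]
    congr 1
    rw [intervalIntegral.integral_congr (g :=
      fun ξ₂ => cfac j₁ a * ((∫ ξ₁ in (0:ℝ)..1, m₁₂ ξ₁ ξ₂ * ee a ξ₁) * ee b ξ₂))
      (fun ξ₂ _ => by rw [step3 ξ₂]; ring)]
    rw [intervalIntegral.integral_const_mul]
  -- step 4 : norms
  have hnormc : ‖cfac j₂ b‖ * ‖cfac j₁ a‖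
      = ((2 * π * |(a:ℝ)|)⁻¹) ^ j₁ * ((2 * π * |(b:ℝ)|)⁻¹) ^ j₂ := by
    rw [cfac, cfac, norm_pow, norm_pow, norm_c, norm_c]; ring
  rw [keyeq, norm_mul, norm_mul, ← mul_assoc, hnormc]
  apply mul_le_mul_of_nonneg_left _ (by positivity)
  -- ‖∫ξ₂ (inner) * ee b‖ ≤ ∫ξ₁∫ξ₂ ‖m₁₂‖
  have hb1 : ‖∫ ξ₂ in (0:ℝ)..1, (∫ ξ₁ in (0:ℝ)..1, m₁₂ ξ₁ ξ₂ * ee a ξ₁) * ee b ξ₂‖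
      ≤ ∫ ξ₂ in (0:ℝ)..1, ‖∫ ξ₁ in (0:ℝ)..1, m₁₂ ξ₁ ξ₂ * ee a ξ₁‖ := norm_intg_ee_le0 b
  refine hb1.trans ?_
  have hswapnorm : (∫ ξ₂ in (0:ℝ)..1, ∫ ξ₁ in (0:ℝ)..1, ‖m₁₂ ξ₁ ξ₂‖)
      = ∫ ξ₁ in (0:ℝ)..1, ∫ ξ₂ in (0:ℝ)..1, ‖m₁₂ ξ₁ ξ₂‖ :=
    (swap01 (F := fun ξ₁ ξ₂ => ‖m₁₂ ξ₁ ξ₂‖) (hm₁₂smooth.continuous.norm)).symm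
  rw [← hswapnorm]
  -- monotonicity
  apply intervalIntegral.integral_mono_on zero_le_one
  · -- integrable LHS
    apply Continuous.intervalIntegrable
    have : Continuous (fun ξ₂ => ∫ ξ₁ in (0:ℝ)..1, m₁₂ ξ₁ ξ₂ * ee a ξ₁) := by
      apply intervalIntegral.continuous_parametric_intervalIntegral_of_continuous'
      apply Continuous.mul
      · exact hm₁₂smooth.continuous.comp (continuous_snd.prodMk continuous_fst)
      · exact (ee_continuous a).comp continuous_snd
    exact this.norm
  · apply Continuous.intervalIntegrable
    apply intervalIntegral.continuous_parametric_intervalIntegral_of_continuous'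
    exact (hm₁₂smooth.continuous.comp (continuous_snd.prodMk continuous_fst)).norm
  · intro ξ₂ _
    exact norm_intg_ee_le0 a

noncomputable def Wfun (r : ℝ) (a : ℤ) : ℝ :=
  if a = 0 then 1 else min 1 (((2 * π * r * |(a:ℝ)|))⁻¹ ^ 2)

lemma Wfun_nonneg (r : ℝ) (a : ℤ) : 0 ≤ Wfun r a := by
  unfold Wfun; split
  · norm_num
  · exact le_min zero_le_one (by positivity)

lemma Wfun_le_one (r : ℝ) (a : ℤ) : Wfun r a ≤ 1 := by
  unfold Wfun; split
  · norm_num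
  · exact min_le_left _ _

lemma Wfun_neg (r : ℝ) (a : ℤ) : Wfun r (-a) = Wfun r a := by
  unfold Wfun
  simp [neg_eq_zero, abs_neg]

-- finite real sum bound
lemma sumW_finite {r : ℝ} (hr : 0 < r) (hr1 : r ≤ 1) (n : ℕ) :
    ∑ a ∈ Finset.range n, r * Wfun r (a:ℤ) ≤ 4 := by
  set N : ℕ := ⌈1/r⌉₊ with hN
  have hN1 : 1 ≤ N := Nat.one_le_ceil_iff.mpr (by positivity)
  have hNr : 1/r ≤ N := Nat.le_ceil _
  have hNinv : (N:ℝ)⁻¹ ≤ r := by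
    rw [inv_le_comm₀ (by positivity) hr]
    · rwa [one_div] at hNr
  have hNle : (N:ℝ) ≤ 1/r + 1 := (Nat.ceil_lt_add_one (by positivity)).le
  have hpoint : ∀ a : ℕ, r * Wfun r (a:ℤ)
      ≤ (if a ≤ N then r else 0) + (if N < a then r⁻¹ * ((a:ℝ)^2)⁻¹ else 0) := by
    intro a
    by_cases hle : a ≤ N
    · rw [if_pos hle, if_neg (by omega)]
      have := Wfun_le_one r (a:ℤ)
      nlinarith [Wfun_nonneg r (a:ℤ)]
    · rw [if_neg hle, if_pos (by omega), zero_add]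
      have ha0 : (a:ℤ) ≠ 0 := by omega
      have ha1 : (1:ℝ) ≤ (a:ℝ) := by exact_mod_cast Nat.one_le_iff_ne_zero.mpr (by omega)
      rw [Wfun, if_neg ha0]
      have habs : |((a:ℤ):ℝ)| = (a:ℝ) := by
        rw [abs_of_nonneg] <;> [push_cast; skip] <;> [rfl; positivity]
      have hb : min 1 ((2 * π * r * |((a:ℤ):ℝ)|)⁻¹ ^ 2) ≤ (2 * π * r * (a:ℝ))⁻¹ ^ 2 := by
        rw [habs]; exact min_le_right _ _
      have h2pi : (1:ℝ) ≤ 2 * π := by nlinarith [Real.pi_gt_three]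
      have hval : r * ((2 * π * r * (a:ℝ))⁻¹ ^ 2) ≤ r⁻¹ * ((a:ℝ)^2)⁻¹ := by
        rw [mul_inv, mul_inv, mul_pow, mul_pow]
        have h1 : ((2*π)⁻¹)^2 ≤ 1 := by
          rw [sq_le_one_iff_abs_le_one, abs_of_pos (by positivity)]
          rw [inv_le_one_iff₀]; right; exact h2pi
        have h2 : (0:ℝ) < ((a:ℝ)^2)⁻¹ := by positivity
        have h3 : r * (r⁻¹)^2 = r⁻¹ := by field_simp [hr.ne']
        calc r * (((2*π)⁻¹)^2 * (r⁻¹)^2 * ((a:ℝ)⁻¹)^2)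
            ≤ r * (1 * (r⁻¹)^2 * ((a:ℝ)⁻¹)^2) := by
              apply mul_le_mul_of_nonneg_left _ hr.le
              apply mul_le_mul_of_nonneg_right _ (by positivity)
              apply mul_le_mul_of_nonneg_right h1 (by positivity)
          _ = r⁻¹ * ((a:ℝ)^2)⁻¹ := by rw [one_mul, ← mul_assoc, h3, ← inv_pow]
      calc r * min 1 ((2 * π * r * |((a:ℤ):ℝ)|)⁻¹ ^ 2)
          ≤ r * ((2 * π * r * (a:ℝ))⁻¹ ^ 2) := mul_le_mul_of_nonneg_left hb hr.le
        _ ≤ r⁻¹ * ((a:ℝ)^2)⁻¹ := hval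
  calc ∑ a ∈ Finset.range n, r * Wfun r (a:ℤ)
      ≤ ∑ a ∈ Finset.range n, ((if a ≤ N then r else 0) + (if N < a then r⁻¹ * ((a:ℝ)^2)⁻¹ else 0)) :=
        Finset.sum_le_sum (fun a _ => hpoint a)
    _ = (∑ a ∈ Finset.range n, if a ≤ N then r else 0)
        + ∑ a ∈ Finset.range n, (if N < a then r⁻¹ * ((a:ℝ)^2)⁻¹ else 0) := Finset.sum_add_distrib
    _ ≤ 3 + 1 := by
        gcongr
        · -- first sum ≤ (N+1) * r ≤ 3
          calc (∑ a ∈ Finset.range n, if a ≤ N then r else 0)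
              ≤ ∑ a ∈ Finset.range (N+1), r := by
                rw [← Finset.sum_filter]
                apply Finset.sum_le_sum_of_subset_of_nonneg
                · intro a ha
                  simp only [Finset.mem_filter, Finset.mem_range] at ha ⊢
                  omega
                · intro _ _ _; exact hr.le
            _ = (N+1) * r := by rw [Finset.sum_const, Finset.card_range]; push_cast; ring
            _ ≤ (1/r + 1 + 1) * r := by
                apply mul_le_mul_of_nonneg_right _ hr.le
                push_cast; linarith
            _ = 1 + 2*r := by field_simp; ring
            _ ≤ 3 := by linarith
        · -- second sum : tail
          rw [← Finset.sum_filter]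
          have hsub : (Finset.range n).filter (fun a => N < a) ⊆ Finset.Ioc N (n + N) := by
            intro a ha
            simp only [Finset.mem_filter, Finset.mem_range, Finset.mem_Ioc] at ha ⊢
            omega
          calc ∑ a ∈ (Finset.range n).filter (fun a => N < a), r⁻¹ * ((a:ℝ)^2)⁻¹
              ≤ ∑ a ∈ Finset.Ioc N (n+N), r⁻¹ * ((a:ℝ)^2)⁻¹ := by
                apply Finset.sum_le_sum_of_subset_of_nonneg hsub
                intro _ _ _; positivity
            _ = r⁻¹ * ∑ a ∈ Finset.Ioc N (n+N), ((a:ℝ)^2)⁻¹ := by rw [Finset.mul_sum]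
            _ ≤ r⁻¹ * ((N:ℝ)⁻¹ - ((n+N:ℕ):ℝ)⁻¹) := by
                apply mul_le_mul_of_nonneg_left _ (by positivity)
                exact sum_Ioc_inv_sq_le_sub (by omega) (by omega)
            _ ≤ r⁻¹ * (N:ℝ)⁻¹ := by
                apply mul_le_mul_of_nonneg_left _ (by positivity)
                have : (0:ℝ) ≤ ((n+N:ℕ):ℝ)⁻¹ := by positivity
                linarith
            _ ≤ r⁻¹ * r := by
                exact mul_le_mul_of_nonneg_left hNinv (by positivity)
            _ = 1 := by field_simp
    _ = 4 := by norm_num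

lemma sumW_nat {r : ℝ} (hr : 0 < r) (hr1 : r ≤ 1) :
    ∑' n : ℕ, ENNReal.ofReal (r * Wfun r (n:ℤ)) ≤ ENNReal.ofReal 4 := by
  rw [ENNReal.tsum_eq_iSup_nat]
  apply iSup_le
  intro i
  calc ∑ a ∈ Finset.range i, ENNReal.ofReal (r * Wfun r (a:ℤ))
      = ENNReal.ofReal (∑ a ∈ Finset.range i, r * Wfun r (a:ℤ)) :=
        (ENNReal.ofReal_sum_of_nonneg (s := Finset.range i) (f := fun a : ℕ => r * Wfun r (a:ℤ)) (fun a _ => mul_nonneg hr.le (Wfun_nonneg r (a:ℤ)))).symm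
    _ ≤ ENNReal.ofReal 4 := ENNReal.ofReal_le_ofReal (sumW_finite hr hr1 i)

lemma sumW_int {r : ℝ} (hr : 0 < r) (hr1 : r ≤ 1) :
    ∑' a : ℤ, ENNReal.ofReal (r * Wfun r a) ≤ ENNReal.ofReal 8 := by
  rw [tsum_of_nat_of_neg_add_one ENNReal.summable ENNReal.summable]
  have h1 := sumW_nat hr hr1
  have h2 : ∑' n : ℕ, ENNReal.ofReal (r * Wfun r (-((n:ℤ) + 1)))
      ≤ ∑' n : ℕ, ENNReal.ofReal (r * Wfun r (n:ℤ)) := by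
    have key : ∀ n : ℕ, ENNReal.ofReal (r * Wfun r (-((n:ℤ) + 1)))
        = ENNReal.ofReal (r * Wfun r (((n+1:ℕ):ℤ))) := by
      intro n
      rw [show -((n:ℤ)+1) = -(((n+1:ℕ):ℤ)) by push_cast; ring, Wfun_neg]
    rw [tsum_congr key]
    exact ENNReal.summable.tsum_le_tsum_of_inj (· + 1) (add_left_injective 1) (fun c _ => zero_le)
      (fun n => le_rfl) ENNReal.summable
  calc (∑' n : ℕ, ENNReal.ofReal (r * Wfun r (n:ℤ)))
        + ∑' n : ℕ, ENNReal.ofReal (r * Wfun r (-((n:ℤ) + 1)))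
      ≤ ENNReal.ofReal 4 + ENNReal.ofReal 4 := add_le_add h1 (h2.trans h1)
    _ = ENNReal.ofReal 8 := by rw [← ENNReal.ofReal_add] <;> norm_num

lemma kernel_bound_W {m : ℝ → ℝ → ℂ} (hm : ContDiff ℝ ∞ (fun ξ : ℝ × ℝ => m ξ.1 ξ.2))
    (hper1 : ∀ ξ₁ ξ₂ : ℝ, m (ξ₁ + 1) ξ₂ = m ξ₁ ξ₂)
    (hper2 : ∀ ξ₁ ξ₂ : ℝ, m ξ₁ (ξ₂ + 1) = m ξ₁ ξ₂)
    {r₁ r₂ M : ℝ} (hr₁ : 0 < r₁) (hr₂ : 0 < r₂)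
    (hM : ∀ j₁ j₂ : ℕ, j₁ ≤ 2 → j₂ ≤ 2 →
      (∫ ξ₁ in (0:ℝ)..1, ∫ ξ₂ in (0:ℝ)..1,
        r₁ ^ ((j₁ : ℝ) - 1) * r₂ ^ ((j₂ : ℝ) - 1) *
          ‖iteratedDeriv j₁ (fun a : ℝ => iteratedDeriv j₂ (m a) ξ₂) ξ₁‖) ≤ M)
    (a b : ℤ) :
    ‖Kker m a b‖ ≤ M * (r₁ * Wfun r₁ a) * (r₂ * Wfun r₂ b) := by
  have hInt : ∀ j₁ j₂ : ℕ, j₁ ≤ 2 → j₂ ≤ 2 →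
      (∫ ξ₁ in (0:ℝ)..1, ∫ ξ₂ in (0:ℝ)..1,
        ‖iteratedDeriv j₁ (fun t : ℝ => iteratedDeriv j₂ (m t) ξ₂) ξ₁‖)
      ≤ M * r₁ ^ (1 - (j₁:ℝ)) * r₂ ^ (1 - (j₂:ℝ)) := by
    intro j₁ j₂ h1 h2
    have hc : (0:ℝ) < r₁ ^ ((j₁ : ℝ) - 1) * r₂ ^ ((j₂ : ℝ) - 1) := by positivity
    have heq : (∫ ξ₁ in (0:ℝ)..1, ∫ ξ₂ in (0:ℝ)..1,
        r₁ ^ ((j₁ : ℝ) - 1) * r₂ ^ ((j₂ : ℝ) - 1) *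
          ‖iteratedDeriv j₁ (fun a : ℝ => iteratedDeriv j₂ (m a) ξ₂) ξ₁‖)
        = r₁ ^ ((j₁ : ℝ) - 1) * r₂ ^ ((j₂ : ℝ) - 1) *
          ∫ ξ₁ in (0:ℝ)..1, ∫ ξ₂ in (0:ℝ)..1,
            ‖iteratedDeriv j₁ (fun t : ℝ => iteratedDeriv j₂ (m t) ξ₂) ξ₁‖ := by
      symm
      rw [← intervalIntegral.integral_const_mul]
      apply intervalIntegral.integral_congr
      intro ξ₁ _
      exact (intervalIntegral.integral_const_mul _ _).symm
    have := hM j₁ j₂ h1 h2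
    rw [heq] at this
    have h3 : (∫ ξ₁ in (0:ℝ)..1, ∫ ξ₂ in (0:ℝ)..1,
        ‖iteratedDeriv j₁ (fun t : ℝ => iteratedDeriv j₂ (m t) ξ₂) ξ₁‖)
        ≤ M / (r₁ ^ ((j₁ : ℝ) - 1) * r₂ ^ ((j₂ : ℝ) - 1)) := by
      rw [le_div_iff₀ hc]
      linarith [this]
    refine h3.trans (le_of_eq ?_)
    rw [div_eq_mul_inv, mul_inv, ← Real.rpow_neg hr₁.le, ← Real.rpow_neg hr₂.le]
    rw [show -((j₁:ℝ) - 1) = 1 - (j₁:ℝ) by ring, show -((j₂:ℝ) - 1) = 1 - (j₂:ℝ) by ring]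
    ring
  have hM0 : 0 ≤ M := by
    refine le_trans ?_ (hM 1 1 one_le_two one_le_two)
    apply intervalIntegral.integral_nonneg zero_le_one
    intro ξ₁ _
    apply intervalIntegral.integral_nonneg zero_le_one
    intro ξ₂ _
    positivity
  -- combined bound for valid choices
  have hcomb : ∀ j₁ j₂ : ℕ, (j₁ = 0 ∨ (j₁ = 2 ∧ a ≠ 0)) → (j₂ = 0 ∨ (j₂ = 2 ∧ b ≠ 0)) →
      ‖Kker m a b‖ ≤ M * (((2 * π * |(a:ℝ)|)⁻¹) ^ j₁ * r₁ ^ (1 - (j₁:ℝ)))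
        * (((2 * π * |(b:ℝ)|)⁻¹) ^ j₂ * r₂ ^ (1 - (j₂:ℝ))) := by
    intro j₁ j₂ hj₁ hj₂
    have hj₁2 : j₁ ≤ 2 := by rcases hj₁ with h | ⟨h, _⟩ <;> omega
    have hj₂2 : j₂ ≤ 2 := by rcases hj₂ with h | ⟨h, _⟩ <;> omega
    refine (kernel_bound hm hper1 hper2 a b j₁ j₂ hj₁ hj₂).trans ?_
    calc ((2 * π * |(a:ℝ)|)⁻¹) ^ j₁ * ((2 * π * |(b:ℝ)|)⁻¹) ^ j₂ *
          ∫ ξ₁ in (0:ℝ)..1, ∫ ξ₂ in (0:ℝ)..1,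
            ‖iteratedDeriv j₁ (fun t : ℝ => iteratedDeriv j₂ (m t) ξ₂) ξ₁‖
        ≤ ((2 * π * |(a:ℝ)|)⁻¹) ^ j₁ * ((2 * π * |(b:ℝ)|)⁻¹) ^ j₂ *
          (M * r₁ ^ (1 - (j₁:ℝ)) * r₂ ^ (1 - (j₂:ℝ))) := by
          apply mul_le_mul_of_nonneg_left (hInt j₁ j₂ hj₁2 hj₂2) (by positivity)
      _ = M * (((2 * π * |(a:ℝ)|)⁻¹) ^ j₁ * r₁ ^ (1 - (j₁:ℝ)))
          * (((2 * π * |(b:ℝ)|)⁻¹) ^ j₂ * r₂ ^ (1 - (j₂:ℝ))) := by ring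
  -- choice per variable
  have hA : ∀ (r : ℝ) (c : ℤ), 0 < r → ∃ j : ℕ, (j = 0 ∨ (j = 2 ∧ c ≠ 0)) ∧
      ((2 * π * |(c:ℝ)|)⁻¹) ^ j * r ^ (1 - (j:ℝ)) = r * Wfun r c := by
    intro r c hrpos
    by_cases hc : c = 0
    · refine ⟨0, Or.inl rfl, ?_⟩
      simp [Wfun, hc, Real.rpow_one]
    · rcases min_cases (1:ℝ) (((2 * π * r * |(c:ℝ)|))⁻¹ ^ 2) with ⟨hmin, _⟩ | ⟨hmin, _⟩
      · refine ⟨0, Or.inl rfl, ?_⟩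
        simp only [Wfun, if_neg hc, hmin]
        simp [Real.rpow_one]
      · refine ⟨2, Or.inr ⟨rfl, hc⟩, ?_⟩
        simp only [Wfun, if_neg hc, hmin]
        have : (1:ℝ) - (2:ℕ) = -1 := by norm_num
        rw [this, Real.rpow_neg_one]
        have hc0 : |(c:ℝ)| ≠ 0 := by
          simp only [ne_eq, abs_eq_zero, Int.cast_eq_zero]; exact hc
        field_simp
  obtain ⟨j₁, hj₁, he₁⟩ := hA r₁ a hr₁
  obtain ⟨j₂, hj₂, he₂⟩ := hA r₂ b hr₂
  have := hcomb j₁ j₂ hj₁ hj₂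
  rwa [he₁, he₂] at this

lemma kernel_sum_bound {m : ℝ → ℝ → ℂ} (hm : ContDiff ℝ ∞ (fun ξ : ℝ × ℝ => m ξ.1 ξ.2))
    (hper1 : ∀ ξ₁ ξ₂ : ℝ, m (ξ₁ + 1) ξ₂ = m ξ₁ ξ₂)
    (hper2 : ∀ ξ₁ ξ₂ : ℝ, m ξ₁ (ξ₂ + 1) = m ξ₁ ξ₂)
    {r₁ r₂ M : ℝ} (hr₁ : 0 < r₁) (hr₁1 : r₁ ≤ 1) (hr₂ : 0 < r₂) (hr₂1 : r₂ ≤ 1)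
    (hM : ∀ j₁ j₂ : ℕ, j₁ ≤ 2 → j₂ ≤ 2 →
      (∫ ξ₁ in (0:ℝ)..1, ∫ ξ₂ in (0:ℝ)..1,
        r₁ ^ ((j₁ : ℝ) - 1) * r₂ ^ ((j₂ : ℝ) - 1) *
          ‖iteratedDeriv j₁ (fun a : ℝ => iteratedDeriv j₂ (m a) ξ₂) ξ₁‖) ≤ M) :
    ∑' q : ℤ × ℤ, (‖Kker m q.1 q.2‖₊ : ℝ≥0∞) ≤ ENNReal.ofReal (64 * M) := by
  have hM0 : 0 ≤ M := by
    refine le_trans ?_ (hM 1 1 one_le_two one_le_two)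
    apply intervalIntegral.integral_nonneg zero_le_one
    intro ξ₁ _
    apply intervalIntegral.integral_nonneg zero_le_one
    intro ξ₂ _
    positivity
  have hpt : ∀ q : ℤ × ℤ, (‖Kker m q.1 q.2‖₊ : ℝ≥0∞)
      ≤ ENNReal.ofReal M * (ENNReal.ofReal (r₁ * Wfun r₁ q.1) * ENNReal.ofReal (r₂ * Wfun r₂ q.2)) := by
    intro q
    have h := kernel_bound_W hm hper1 hper2 hr₁ hr₂ hM q.1 q.2
    calc (‖Kker m q.1 q.2‖₊ : ℝ≥0∞) = ENNReal.ofReal ‖Kker m q.1 q.2‖ :=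
          (ofReal_norm _).symm
      _ ≤ ENNReal.ofReal (M * (r₁ * Wfun r₁ q.1) * (r₂ * Wfun r₂ q.2)) :=
          ENNReal.ofReal_le_ofReal h
      _ = ENNReal.ofReal M * (ENNReal.ofReal (r₁ * Wfun r₁ q.1) * ENNReal.ofReal (r₂ * Wfun r₂ q.2)) := by
          rw [mul_assoc, ENNReal.ofReal_mul hM0,
            ENNReal.ofReal_mul (mul_nonneg hr₁.le (Wfun_nonneg r₁ q.1))]
  calc ∑' q : ℤ × ℤ, (‖Kker m q.1 q.2‖₊ : ℝ≥0∞)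
      ≤ ∑' q : ℤ × ℤ, ENNReal.ofReal M *
          (ENNReal.ofReal (r₁ * Wfun r₁ q.1) * ENNReal.ofReal (r₂ * Wfun r₂ q.2)) :=
        ENNReal.tsum_le_tsum hpt
    _ = ENNReal.ofReal M * ∑' q : ℤ × ℤ,
          (ENNReal.ofReal (r₁ * Wfun r₁ q.1) * ENNReal.ofReal (r₂ * Wfun r₂ q.2)) :=
        ENNReal.tsum_mul_left
    _ = ENNReal.ofReal M * ((∑' a : ℤ, ENNReal.ofReal (r₁ * Wfun r₁ a)) *
          (∑' b : ℤ, ENNReal.ofReal (r₂ * Wfun r₂ b))) := by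
        congr 1
        rw [ENNReal.tsum_prod']
        simp_rw [ENNReal.tsum_mul_left, ENNReal.tsum_mul_right]
    _ ≤ ENNReal.ofReal M * (ENNReal.ofReal 8 * ENNReal.ofReal 8) := by
        apply mul_le_mul_right (mul_le_mul' (sumW_int hr₁ hr₁1) (sumW_int hr₂ hr₂1))
    _ = ENNReal.ofReal (64 * M) := by
        rw [← ENNReal.ofReal_mul (by norm_num : (0:ℝ) ≤ 8), ← ENNReal.ofReal_mul hM0]
        norm_num [mul_comm]

lemma ee_mul_exp (n x : ℤ) (ξ₁ ξ₂ : ℝ) (n' : ℤ) :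
    ee n ξ₁ * ee n' ξ₂ * Complex.exp (-(2 * (π:ℂ) * Complex.I) * (x:ℂ) * ((ξ₁:ℂ) + (ξ₂:ℂ)))
      = ee (n - x) ξ₁ * ee (n' - x) ξ₂ := by
  rw [ee, ee, ee, ee, ← Complex.exp_add, ← Complex.exp_add, ← Complex.exp_add]
  congr 1
  push_cast
  ring

lemma Bx_eq {m : ℝ → ℝ → ℂ} (hmc : Continuous (fun ξ : ℝ × ℝ => m ξ.1 ξ.2))
    (f g : ℤ → ℂ) (S₁ S₂ : Finset ℤ)
    (hf : ∀ n ∉ S₁, f n = 0) (hg : ∀ n ∉ S₂, g n = 0) (x : ℤ) :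
    (∫ ξ₁ in (0:ℝ)..1, ∫ ξ₂ in (0:ℝ)..1,
        m ξ₁ ξ₂ *
          (∑' n : ℤ, f n * Complex.exp (2 * (π : ℂ) * Complex.I * (n : ℂ) * (ξ₁ : ℂ))) *
          (∑' n : ℤ, g n * Complex.exp (2 * (π : ℂ) * Complex.I * (n : ℂ) * (ξ₂ : ℂ))) *
          Complex.exp (-(2 * (π : ℂ) * Complex.I) * (x : ℂ) * ((ξ₁ : ℂ) + (ξ₂ : ℂ))))
      = ∑ q ∈ S₁ ×ˢ S₂, f q.1 * g q.2 * Kker m (q.1 - x) (q.2 - x) := by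
  have htsum₁ : ∀ ξ₁ : ℝ, (∑' n : ℤ, f n * Complex.exp (2 * (π : ℂ) * Complex.I * (n : ℂ) * (ξ₁ : ℂ)))
      = ∑ n ∈ S₁, f n * ee n ξ₁ := by
    intro ξ₁
    apply tsum_eq_sum
    intro n hn
    rw [hf n hn, zero_mul]
  have htsum₂ : ∀ ξ₂ : ℝ, (∑' n : ℤ, g n * Complex.exp (2 * (π : ℂ) * Complex.I * (n : ℂ) * (ξ₂ : ℂ)))
      = ∑ n ∈ S₂, g n * ee n ξ₂ := by
    intro ξ₂
    apply tsum_eq_sum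
    intro n hn
    rw [hg n hn, zero_mul]
  have expand : ∀ ξ₁ ξ₂ : ℝ,
      m ξ₁ ξ₂ * (∑ n ∈ S₁, f n * ee n ξ₁) * (∑ n ∈ S₂, g n * ee n ξ₂) *
          Complex.exp (-(2 * (π:ℂ) * Complex.I) * (x:ℂ) * ((ξ₁:ℂ) + (ξ₂:ℂ)))
        = ∑ q ∈ S₁ ×ˢ S₂, f q.1 * g q.2 * (m ξ₁ ξ₂ * ee (q.1 - x) ξ₁ * ee (q.2 - x) ξ₂) := by
    intro ξ₁ ξ₂
    rw [Finset.sum_product]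
    calc m ξ₁ ξ₂ * (∑ n ∈ S₁, f n * ee n ξ₁) * (∑ n ∈ S₂, g n * ee n ξ₂) *
            Complex.exp (-(2 * (π:ℂ) * Complex.I) * (x:ℂ) * ((ξ₁:ℂ) + (ξ₂:ℂ)))
        = (∑ n ∈ S₁, f n * ee n ξ₁) * (∑ n ∈ S₂, g n * ee n ξ₂) *
            (m ξ₁ ξ₂ * Complex.exp (-(2 * (π:ℂ) * Complex.I) * (x:ℂ) * ((ξ₁:ℂ) + (ξ₂:ℂ)))) := by
          ring
      _ = ∑ n₁ ∈ S₁, ∑ n₂ ∈ S₂, (f n₁ * ee n₁ ξ₁) * (g n₂ * ee n₂ ξ₂) *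
            (m ξ₁ ξ₂ * Complex.exp (-(2 * (π:ℂ) * Complex.I) * (x:ℂ) * ((ξ₁:ℂ) + (ξ₂:ℂ)))) := by
          rw [Finset.sum_mul_sum, Finset.sum_mul]
          apply Finset.sum_congr rfl
          intro n₁ _
          rw [Finset.sum_mul]
      _ = ∑ n₁ ∈ S₁, ∑ n₂ ∈ S₂, f n₁ * g n₂ * (m ξ₁ ξ₂ * ee (n₁ - x) ξ₁ * ee (n₂ - x) ξ₂) := by
          apply Finset.sum_congr rfl
          intro n₁ _
          apply Finset.sum_congr rfl
          intro n₂ _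
          linear_combination (f n₁ * g n₂ * m ξ₁ ξ₂) * ee_mul_exp n₁ x ξ₁ ξ₂ n₂
  -- continuity of terms
  have hcont_term : ∀ q : ℤ × ℤ, Continuous (fun ξ : ℝ × ℝ =>
      f q.1 * g q.2 * (m ξ.1 ξ.2 * ee (q.1 - x) ξ.1 * ee (q.2 - x) ξ.2)) := by
    intro q
    apply Continuous.mul continuous_const
    apply Continuous.mul
    apply Continuous.mul hmc
    · exact (ee_continuous _).comp continuous_fst
    · exact (ee_continuous _).comp continuous_snd
  calc (∫ ξ₁ in (0:ℝ)..1, ∫ ξ₂ in (0:ℝ)..1,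
        m ξ₁ ξ₂ *
          (∑' n : ℤ, f n * Complex.exp (2 * (π : ℂ) * Complex.I * (n : ℂ) * (ξ₁ : ℂ))) *
          (∑' n : ℤ, g n * Complex.exp (2 * (π : ℂ) * Complex.I * (n : ℂ) * (ξ₂ : ℂ))) *
          Complex.exp (-(2 * (π : ℂ) * Complex.I) * (x : ℂ) * ((ξ₁ : ℂ) + (ξ₂ : ℂ))))
      = ∫ ξ₁ in (0:ℝ)..1, ∫ ξ₂ in (0:ℝ)..1,
          ∑ q ∈ S₁ ×ˢ S₂, f q.1 * g q.2 * (m ξ₁ ξ₂ * ee (q.1 - x) ξ₁ * ee (q.2 - x) ξ₂) := by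
        apply intervalIntegral.integral_congr
        intro ξ₁ _
        apply intervalIntegral.integral_congr
        intro ξ₂ _
        simp only [htsum₁, htsum₂]
        exact expand ξ₁ ξ₂
    _ = ∫ ξ₁ in (0:ℝ)..1, ∑ q ∈ S₁ ×ˢ S₂,
          ∫ ξ₂ in (0:ℝ)..1, f q.1 * g q.2 * (m ξ₁ ξ₂ * ee (q.1 - x) ξ₁ * ee (q.2 - x) ξ₂) := by
        apply intervalIntegral.integral_congr
        intro ξ₁ _
        apply intervalIntegral.integral_finset_sum
        intro q _
        apply Continuous.intervalIntegrable
        exact (hcont_term q).comp (Continuous.prodMk continuous_const continuous_id)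
    _ = ∑ q ∈ S₁ ×ˢ S₂, ∫ ξ₁ in (0:ℝ)..1,
          ∫ ξ₂ in (0:ℝ)..1, f q.1 * g q.2 * (m ξ₁ ξ₂ * ee (q.1 - x) ξ₁ * ee (q.2 - x) ξ₂) := by
        apply intervalIntegral.integral_finset_sum
        intro q _
        apply Continuous.intervalIntegrable
        apply intervalIntegral.continuous_parametric_intervalIntegral_of_continuous'
        exact hcont_term q
    _ = ∑ q ∈ S₁ ×ˢ S₂, f q.1 * g q.2 * Kker m (q.1 - x) (q.2 - x) := by
        apply Finset.sum_congr rfl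
        intro q _
        rw [Kker]
        rw [← intervalIntegral.integral_const_mul]
        apply intervalIntegral.integral_congr
        intro ξ₁ _
        exact (intervalIntegral.integral_const_mul _ _)

lemma zmeas {β : Type*} [MeasurableSpace β] (f : ℤ → β) : Measurable f :=
  measurable_of_countable f

lemma zaesm (f : ℤ → ℂ) (μ : Measure ℤ) : AEStronglyMeasurable f μ :=
  (zmeas f).aestronglyMeasurable

lemma count_mp (a : ℤ) : MeasurePreserving (fun x : ℤ => x + a) Measure.count Measure.count := by
  refine ⟨measurable_of_countable _, ?_⟩
  ext s hs
  rw [Measure.map_apply (measurable_of_countable _) hs]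
  have himg : (fun x : ℤ => x + a) ⁻¹' s = (fun x : ℤ => x - a) '' s := by
    ext y
    simp only [Set.mem_preimage, Set.mem_image]
    constructor
    · intro hy; exact ⟨y + a, hy, by ring⟩
    · rintro ⟨z, hz, rfl⟩; simpa [sub_add_cancel] using hz
  rw [himg, Measure.count_injective_image (fun u v huv => by omega)]

lemma eLpNorm_translate (f : ℤ → ℂ) (a : ℤ) (q : ℝ≥0∞) :
    eLpNorm (fun x : ℤ => f (x + a)) q Measure.count = eLpNorm f q Measure.count :=
  eLpNorm_comp_measurePreserving (zaesm f _) (count_mp a)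

lemma apply_le_eLpNorm_top (f : ℤ → ℂ) (y : ℤ) :
    (‖f y‖₊ : ℝ≥0∞) ≤ eLpNorm f ∞ Measure.count := by
  rw [eLpNorm_exponent_top, eLpNormEssSup]
  have h := ae_le_essSup (f := fun x : ℤ => (‖f x‖₊ : ℝ≥0∞)) (μ := Measure.count)
  rw [ae_iff, Measure.count_eq_zero_iff] at h
  by_contra hc
  exact Set.eq_empty_iff_forall_notMem.mp h y hc

-- Minkowski for countable sums, ENNReal-valued, exponent 1 ≤ pr < ∞
lemma mink_tsum {ι : Type*} [Countable ι] (h : ι → ℤ → ℝ≥0∞) {pr : ℝ} (hpr : 1 ≤ pr) :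
    (∫⁻ x, (∑' i, h i x) ^ pr ∂(Measure.count : Measure ℤ)) ^ (1/pr)
      ≤ ∑' i, (∫⁻ x, (h i x) ^ pr ∂(Measure.count : Measure ℤ)) ^ (1/pr) := by
  classical
  have hpr0 : pr ≠ 0 := by linarith
  have hpr0' : 0 < pr := by linarith
  set ρ : (ℤ → ℝ≥0∞) → ℝ≥0∞ := fun u => (∫⁻ x, (u x) ^ pr ∂(Measure.count : Measure ℤ)) ^ (1/pr)
    with hρ
  have hfin : ∀ s : Finset ι, ρ (fun x => ∑ i ∈ s, h i x) ≤ ∑ i ∈ s, ρ (h i) := by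
    intro s
    induction s using Finset.induction with
    | empty =>
      rw [hρ]
      simp only [Finset.sum_empty]
      rw [show (fun x : ℤ => (0:ℝ≥0∞) ^ pr) = fun _ => 0 from by
            ext x; exact ENNReal.zero_rpow_of_pos hpr0',
        lintegral_zero, ENNReal.zero_rpow_of_pos (one_div_pos.mpr hpr0')]
    | insert _ _ hnotmem ih =>
      rename_i a s'
      rw [Finset.sum_insert hnotmem]
      calc ρ (fun x => ∑ i ∈ insert a s', h i x)
          = ρ (fun x => h a x + ∑ i ∈ s', h i x) := by
            congr 1; ext x; rw [Finset.sum_insert hnotmem]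
        _ ≤ ρ (h a) + ρ (fun x => ∑ i ∈ s', h i x) :=
            ENNReal.lintegral_Lp_add_le (zmeas _).aemeasurable (zmeas _).aemeasurable hpr
        _ ≤ ρ (h a) + ∑ i ∈ s', ρ (h i) := add_le_add_right ih _
  set C : ℝ≥0∞ := ∑' i, ρ (h i) with hC
  have hsup : ∀ x : ℤ, (∑' i, h i x) = ⨆ s : Finset ι, ∑ i ∈ s, h i x :=
    fun x => ENNReal.tsum_eq_iSup_sum
  have hdir : Directed (· ≤ ·) (fun s : Finset ι => fun x => (∑ i ∈ s, h i x) ^ pr) := by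
    intro s t
    exact ⟨s ∪ t,
      fun x => ENNReal.rpow_le_rpow
        (Finset.sum_le_sum_of_subset Finset.subset_union_left) hpr0'.le,
      fun x => ENNReal.rpow_le_rpow
        (Finset.sum_le_sum_of_subset Finset.subset_union_right) hpr0'.le⟩
  have hmono : (∫⁻ x, (∑' i, h i x) ^ pr ∂(Measure.count : Measure ℤ))
      = ⨆ s : Finset ι, ∫⁻ x, (∑ i ∈ s, h i x) ^ pr ∂(Measure.count : Measure ℤ) := by
    calc (∫⁻ x, (∑' i, h i x) ^ pr ∂(Measure.count : Measure ℤ))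
        = ∫⁻ x, ⨆ s : Finset ι, (∑ i ∈ s, h i x) ^ pr ∂(Measure.count : Measure ℤ) := by
          apply lintegral_congr
          intro x
          rw [hsup x]
          exact (ENNReal.monotone_rpow_of_nonneg hpr0'.le).map_iSup_of_continuousAt
            (ENNReal.continuous_rpow_const.continuousAt) (by simp [ENNReal.zero_rpow_of_pos hpr0'])
      _ = ⨆ s : Finset ι, ∫⁻ x, (∑ i ∈ s, h i x) ^ pr ∂(Measure.count : Measure ℤ) :=
          lintegral_iSup_directed (fun s => (zmeas _).aemeasurable) hdir
  rw [show (∫⁻ x, (∑' i, h i x) ^ pr ∂(Measure.count : Measure ℤ)) ^ (1/pr) = ρ (fun x => ∑' i, h i x) from rfl]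
  rw [hρ]
  simp only []
  rw [hmono]
  have hboundeach : ∀ s : Finset ι,
      (∫⁻ x, (∑ i ∈ s, h i x) ^ pr ∂(Measure.count : Measure ℤ)) ≤ C ^ pr := by
    intro s
    have h1 : ρ (fun x => ∑ i ∈ s, h i x) ≤ C :=
      (hfin s).trans (ENNReal.sum_le_tsum s)
    have h2 := ENNReal.rpow_le_rpow h1 hpr0'.le
    rwa [hρ, one_div, ENNReal.rpow_inv_rpow hpr0] at h2
  calc (⨆ s : Finset ι, ∫⁻ x, (∑ i ∈ s, h i x) ^ pr ∂(Measure.count : Measure ℤ)) ^ (1/pr)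
      ≤ (C ^ pr) ^ (1/pr) := ENNReal.rpow_le_rpow (iSup_le hboundeach) (by positivity)
    _ = C := by rw [one_div, ENNReal.rpow_rpow_inv hpr0]

lemma rho_const_mul (c : ℝ≥0∞) (hc : c ≠ ⊤) (u : ℤ → ℝ≥0∞) {pr : ℝ} (hpr : 0 < pr) :
    (∫⁻ x, (c * u x) ^ pr ∂(Measure.count : Measure ℤ)) ^ (1/pr)
      = c * (∫⁻ x, (u x) ^ pr ∂(Measure.count : Measure ℤ)) ^ (1/pr) := by
  simp_rw [ENNReal.mul_rpow_of_nonneg _ _ hpr.le]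
  rw [lintegral_const_mul _ (zmeas _), ENNReal.mul_rpow_of_nonneg _ _ (by positivity : (0:ℝ) ≤ 1/pr),
    one_div, ENNReal.rpow_rpow_inv hpr.ne']

lemma holder_translate (f g : ℤ → ℂ) (k₁ k₂ : ℤ) {p p₁ p₂ : ℝ≥0∞}
    (hpqr : 1/p₁ + 1/p₂ = 1/p) :
    eLpNorm (fun x : ℤ => f (x + k₁) * g (x + k₂)) p Measure.count
      ≤ eLpNorm f p₁ Measure.count * eLpNorm g p₂ Measure.count := by
  haveI : ENNReal.HolderTriple p₁ p₂ p := ⟨by simpa [one_div] using hpqr⟩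
  have h := eLpNorm_smul_le_mul_eLpNorm (μ := Measure.count) (p := p₁) (q := p₂) (r := p)
      (f := fun x : ℤ => g (x + k₂)) (φ := fun x : ℤ => f (x + k₁))
      (zaesm _ _) (zaesm _ _)
  rw [eLpNorm_translate f k₁ p₁, eLpNorm_translate g k₂ p₂] at h
  exact h

lemma Bx_pointwise (m : ℝ → ℝ → ℂ) (f g : ℤ → ℂ) (S₁ S₂ : Finset ℤ) (x : ℤ) :
    (‖∑ q ∈ S₁ ×ˢ S₂, f q.1 * g q.2 * Kker m (q.1 - x) (q.2 - x)‖₊ : ℝ≥0∞)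
      ≤ ∑' k : ℤ × ℤ, (‖Kker m k.1 k.2‖₊ : ℝ≥0∞) *
          ((‖f (x + k.1)‖₊ : ℝ≥0∞) * (‖g (x + k.2)‖₊ : ℝ≥0∞)) := by
  classical
  set T : ℤ × ℤ → ℝ≥0∞ := fun k => (‖Kker m k.1 k.2‖₊ : ℝ≥0∞) *
      ((‖f (x + k.1)‖₊ : ℝ≥0∞) * (‖g (x + k.2)‖₊ : ℝ≥0∞)) with hT
  set e : ℤ × ℤ → ℤ × ℤ := fun q => (q.1 - x, q.2 - x) with he
  have hinj : Function.Injective e := by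
    intro u v huv
    simp only [he, Prod.mk.injEq] at huv
    ext <;> omega
  calc (‖∑ q ∈ S₁ ×ˢ S₂, f q.1 * g q.2 * Kker m (q.1 - x) (q.2 - x)‖₊ : ℝ≥0∞)
      ≤ ∑ q ∈ S₁ ×ˢ S₂, (‖f q.1 * g q.2 * Kker m (q.1 - x) (q.2 - x)‖₊ : ℝ≥0∞) := by
        rw [← ENNReal.coe_finset_sum]
        exact_mod_cast nnnorm_sum_le _ _
    _ = ∑ q ∈ S₁ ×ˢ S₂, T (e q) := by
        apply Finset.sum_congr rfl
        intro q _
        simp only [hT, he]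
        rw [nnnorm_mul, nnnorm_mul]
        push_cast
        rw [show x + (q.1 - x) = q.1 from by ring, show x + (q.2 - x) = q.2 from by ring]
        ring
    _ = ∑ k ∈ (S₁ ×ˢ S₂).image e, T k := (Finset.sum_image (fun u _ v _ h => hinj h)).symm
    _ ≤ ∑' k : ℤ × ℤ, T k := ENNReal.sum_le_tsum _

/-- Crude bilinear multiplier bound on `ℤ`: let `m : 𝕋² → ℂ` be smooth (realized as a
smooth doubly 1-periodic function on `ℝ²`), `0 < r₁, r₂ ≤ 1` and `1 ≤ p, p₁, p₂ ≤ ∞` with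
`1/p₁ + 1/p₂ = 1/p`.  Then the bilinear Fourier multiplier
`B_m(f,g)(x) = ∫_{𝕋²} m(ξ₁,ξ₂) 𝓕f(ξ₁) 𝓕g(ξ₂) e^{−2πix(ξ₁+ξ₂)} dξ₁ dξ₂`
satisfies `‖B_m(f,g)‖_{ℓ^p} ≲ M ‖f‖_{ℓ^{p₁}} ‖g‖_{ℓ^{p₂}}` whenever
`sup_{0≤j₁,j₂≤2} ∫_{𝕋²} r₁^{j₁−1} r₂^{j₂−1} |∂^{j₁}_{ξ₁} ∂^{j₂}_{ξ₂} m| ≤ M`,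
with an absolute implied constant. -/
theorem stmt13 :
    ∃ C : ℝ, 0 < C ∧
      ∀ (m : ℝ → ℝ → ℂ), ContDiff ℝ (⊤ : ℕ∞) (fun ξ : ℝ × ℝ => m ξ.1 ξ.2) →
        (∀ ξ₁ ξ₂ : ℝ, m (ξ₁ + 1) ξ₂ = m ξ₁ ξ₂ ∧ m ξ₁ (ξ₂ + 1) = m ξ₁ ξ₂) →
      ∀ (r₁ r₂ : ℝ), 0 < r₁ → r₁ ≤ 1 → 0 < r₂ → r₂ ≤ 1 →
      ∀ (p p₁ p₂ : ℝ≥0∞), 1 ≤ p → 1 ≤ p₁ → 1 ≤ p₂ → 1 / p₁ + 1 / p₂ = 1 / p →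
      ∀ M : ℝ,
        (∀ j₁ j₂ : ℕ, j₁ ≤ 2 → j₂ ≤ 2 →
          (∫ ξ₁ in (0:ℝ)..1, ∫ ξ₂ in (0:ℝ)..1,
            r₁ ^ ((j₁ : ℝ) - 1) * r₂ ^ ((j₂ : ℝ) - 1) *
              ‖iteratedDeriv j₁ (fun a : ℝ => iteratedDeriv j₂ (m a) ξ₂) ξ₁‖) ≤ M) →
      ∀ (f g : ℤ → ℂ), (Function.support f).Finite → (Function.support g).Finite →
        eLpNorm
          (fun x : ℤ =>
            ∫ ξ₁ in (0:ℝ)..1, ∫ ξ₂ in (0:ℝ)..1,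
              m ξ₁ ξ₂ *
                (∑' n : ℤ, f n * Complex.exp (2 * (π : ℂ) * Complex.I * (n : ℂ) * (ξ₁ : ℂ))) *
                (∑' n : ℤ, g n * Complex.exp (2 * (π : ℂ) * Complex.I * (n : ℂ) * (ξ₂ : ℂ))) *
                Complex.exp (-(2 * (π : ℂ) * Complex.I) * (x : ℂ) * ((ξ₁ : ℂ) + (ξ₂ : ℂ))))
          p Measure.count ≤
        ENNReal.ofReal (C * M) * (eLpNorm f p₁ Measure.count * eLpNorm g p₂ Measure.count) := by
  refine ⟨64, by norm_num, ?_⟩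
  intro m hm0 hper r₁ r₂ hr₁ hr₁1 hr₂ hr₂1 p p₁ p₂ hp hp₁ hp₂ hpqr M hM f g hf hg
  have hm : ContDiff ℝ ∞ (fun ξ : ℝ × ℝ => m ξ.1 ξ.2) := hm0.of_le (by simp)
  have hper1 : ∀ ξ₁ ξ₂ : ℝ, m (ξ₁ + 1) ξ₂ = m ξ₁ ξ₂ := fun ξ₁ ξ₂ => (hper ξ₁ ξ₂).1
  have hper2 : ∀ ξ₁ ξ₂ : ℝ, m ξ₁ (ξ₂ + 1) = m ξ₁ ξ₂ := fun ξ₁ ξ₂ => (hper ξ₁ ξ₂).2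
  set S₁ : Finset ℤ := hf.toFinset with hS₁
  set S₂ : Finset ℤ := hg.toFinset with hS₂
  have hfS : ∀ n ∉ S₁, f n = 0 := by
    intro n hn
    by_contra h
    exact hn (hf.mem_toFinset.mpr h)
  have hgS : ∀ n ∉ S₂, g n = 0 := by
    intro n hn
    by_contra h
    exact hn (hg.mem_toFinset.mpr h)
  -- rewrite the function
  have hfun : (fun x : ℤ =>
      ∫ ξ₁ in (0:ℝ)..1, ∫ ξ₂ in (0:ℝ)..1,
        m ξ₁ ξ₂ *
          (∑' n : ℤ, f n * Complex.exp (2 * (π : ℂ) * Complex.I * (n : ℂ) * (ξ₁ : ℂ))) *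
          (∑' n : ℤ, g n * Complex.exp (2 * (π : ℂ) * Complex.I * (n : ℂ) * (ξ₂ : ℂ))) *
          Complex.exp (-(2 * (π : ℂ) * Complex.I) * (x : ℂ) * ((ξ₁ : ℂ) + (ξ₂ : ℂ))))
      = fun x : ℤ => ∑ q ∈ S₁ ×ˢ S₂, f q.1 * g q.2 * Kker m (q.1 - x) (q.2 - x) := by
    funext x
    exact Bx_eq hm.continuous f g S₁ S₂ hfS hgS x
  rw [hfun]
  set T : ℤ × ℤ → ℤ → ℝ≥0∞ := fun k x => (‖Kker m k.1 k.2‖₊ : ℝ≥0∞) *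
      ((‖f (x + k.1)‖₊ : ℝ≥0∞) * (‖g (x + k.2)‖₊ : ℝ≥0∞)) with hTdef
  have hpt : ∀ x : ℤ, (‖∑ q ∈ S₁ ×ˢ S₂, f q.1 * g q.2 * Kker m (q.1 - x) (q.2 - x)‖₊ : ℝ≥0∞)
      ≤ ∑' k : ℤ × ℤ, T k x := fun x => Bx_pointwise m f g S₁ S₂ x
  have hKsum : ∑' q : ℤ × ℤ, (‖Kker m q.1 q.2‖₊ : ℝ≥0∞) ≤ ENNReal.ofReal (64 * M) :=
    kernel_sum_bound hm hper1 hper2 hr₁ hr₁1 hr₂ hr₂1 hM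
  set Ef := eLpNorm f p₁ Measure.count with hEf
  set Eg := eLpNorm g p₂ Measure.count with hEg
  by_cases hptop : p = (⊤:ℝ≥0∞)
  · -- p = ∞ : then p₁ = p₂ = ∞
    subst hptop
    have h0 : 1/p₁ + 1/p₂ = 0 := by simpa using hpqr
    rw [add_eq_zero] at h0
    have hp₁top : p₁ = (⊤:ℝ≥0∞) := by
      rcases ENNReal.div_eq_zero_iff.mp h0.1 with h | h
      · exact absurd h one_ne_zero
      · exact h
    have hp₂top : p₂ = (⊤:ℝ≥0∞) := by
      rcases ENNReal.div_eq_zero_iff.mp h0.2 with h | h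
      · exact absurd h one_ne_zero
      · exact h
    rw [eLpNorm_exponent_top, eLpNormEssSup]
    refine essSup_le_of_ae_le _ ?_
    apply Filter.Eventually.of_forall
    intro x
    calc (‖∑ q ∈ S₁ ×ˢ S₂, f q.1 * g q.2 * Kker m (q.1 - x) (q.2 - x)‖₊ : ℝ≥0∞)
        ≤ ∑' k : ℤ × ℤ, T k x := hpt x
      _ ≤ ∑' k : ℤ × ℤ, (‖Kker m k.1 k.2‖₊ : ℝ≥0∞) * (Ef * Eg) := by
          apply ENNReal.tsum_le_tsum
          intro k
          apply mul_le_mul_right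
          apply mul_le_mul'
          · rw [hEf, hp₁top]
            exact apply_le_eLpNorm_top f (x + k.1)
          · rw [hEg, hp₂top]
            exact apply_le_eLpNorm_top g (x + k.2)
      _ = (∑' k : ℤ × ℤ, (‖Kker m k.1 k.2‖₊ : ℝ≥0∞)) * (Ef * Eg) := ENNReal.tsum_mul_right
      _ ≤ ENNReal.ofReal (64 * M) * (Ef * Eg) := mul_le_mul_left hKsum _
  · -- p < ∞
    have hp0 : p ≠ 0 := by
      intro h
      rw [h] at hp
      exact absurd hp (by simp)
    set pr : ℝ := p.toReal with hpr
    have hpr1 : 1 ≤ pr := by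
      rw [hpr, ← ENNReal.toReal_one]
      exact ENNReal.toReal_mono hptop hp
    have hpr0 : 0 < pr := by linarith
    rw [eLpNorm_eq_lintegral_rpow_enorm_toReal hp0 hptop]
    have hrho : ∀ k : ℤ × ℤ, (∫⁻ x, (T k x) ^ pr ∂(Measure.count : Measure ℤ)) ^ (1/pr)
        ≤ (‖Kker m k.1 k.2‖₊ : ℝ≥0∞) * (Ef * Eg) := by
      intro k
      rw [hTdef]
      simp only []
      rw [rho_const_mul _ ENNReal.coe_ne_top _ hpr0]
      apply mul_le_mul_right
      have heq : (∫⁻ x, ((‖f (x + k.1)‖₊ : ℝ≥0∞) * (‖g (x + k.2)‖₊ : ℝ≥0∞)) ^ pr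
          ∂(Measure.count : Measure ℤ)) ^ (1/pr)
          = eLpNorm (fun x : ℤ => f (x + k.1) * g (x + k.2)) p Measure.count := by
        rw [eLpNorm_eq_lintegral_rpow_enorm_toReal hp0 hptop]
        congr 1
        apply lintegral_congr
        intro x
        rw [enorm_mul]
        push_cast
        rfl
      rw [heq]
      exact holder_translate f g k.1 k.2 hpqr
    calc (∫⁻ x, (‖∑ q ∈ S₁ ×ˢ S₂, f q.1 * g q.2 * Kker m (q.1 - x) (q.2 - x)‖₊ : ℝ≥0∞) ^ p.toReal
          ∂(Measure.count : Measure ℤ)) ^ (1 / p.toReal)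
        ≤ (∫⁻ x, (∑' k : ℤ × ℤ, T k x) ^ pr ∂(Measure.count : Measure ℤ)) ^ (1/pr) := by
          apply ENNReal.rpow_le_rpow _ (by positivity)
          apply lintegral_mono
          intro x
          exact ENNReal.rpow_le_rpow (hpt x) hpr0.le
      _ ≤ ∑' k : ℤ × ℤ, (∫⁻ x, (T k x) ^ pr ∂(Measure.count : Measure ℤ)) ^ (1/pr) :=
          mink_tsum T hpr1
      _ ≤ ∑' k : ℤ × ℤ, (‖Kker m k.1 k.2‖₊ : ℝ≥0∞) * (Ef * Eg) :=
          ENNReal.tsum_le_tsum hrho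
      _ = (∑' k : ℤ × ℤ, (‖Kker m k.1 k.2‖₊ : ℝ≥0∞)) * (Ef * Eg) := ENNReal.tsum_mul_right
      _ ≤ ENNReal.ofReal (64 * M) * (Ef * Eg) := mul_le_mul_left hKsum _
end
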